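/- arXiv:1801.00422 — 10 statements merged into one kernel-verified Lean document; each statement's English description precedes it below -/
import Mathlib

section
/- Let f be an entire function in three variables and g an entire function in two variables over C satisfying: (i) f(X+Y,Z,W) − f(Y,Z,W) − f(X,Y+Z,W) + f(X,Y,Z+W) − f(X,Y,Z) = 0; (ii) g(X+Y,Z) − g(Y,Z) − g(X,Z) − f(X,Y,Z) + f(X,Z,Y) − f(Z,X,Y) = 0; (iii) g(X,Y+Z) − g(X,Y) − g(X,Z) + f(X,Y,Z) − f(Y,X,Z) + f(Y,Z,X) = 0; (iv) g(X,Y) + g(Y,X) = 0; (v) g(X,X) = 0. Then there exists an entire function h in two variables over C such that f(X,Y,Z) = h(X+Y,Z) − h(Y,Z) − h(X,Y+Z) + h(X,Y) and g(X,Y) = h(X,Y) − h(Y,X). -/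
/-- A formal power series in `n` variables over a normed ring is *entire* if for every
`r > 0` its coefficients satisfy `‖a_α‖ · r^|α| → 0` as `|α| → ∞`. -/
def MvPowerSeries.IsEntire {C : Type*} [NormedRing C] {n : ℕ}
    (f : MvPowerSeries (Fin n) C) : Prop :=
  ∀ r : ℝ, 0 < r → ∀ ε : ℝ, 0 < ε → ∃ N : ℕ, ∀ d : Fin n →₀ ℕ,
    N ≤ ∑ i, d i → ‖MvPowerSeries.coeff d f‖ * r ^ (∑ i, d i) < ε

/-- Substitution of (pairwise disjoint) sums of variables into a formal power series:
given `s : Fin m → Finset (Fin n)`, substitute `∑_{i ∈ s j} Xᵢ` for the `j`-th variable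
of `f`. -/
noncomputable def MvPowerSeries.substAdd {C : Type*} [CommRing C] {n m : ℕ}
    (s : Fin m → Finset (Fin n)) (f : MvPowerSeries (Fin m) C) :
    MvPowerSeries (Fin n) C :=
  fun α : Fin n →₀ ℕ =>
    if α.support ⊆ Finset.univ.biUnion s then
      (∏ j : Fin m, (Nat.multinomial (s j) α : C)) *
        MvPowerSeries.coeff (Finsupp.equivFunOnFinite.symm fun j => ∑ i ∈ s j, α i) f
    else 0

open MvPowerSeries

/-!
Normalise coefficients by factorials, i.e. expand in the divided powers `X^a / a!`. Substituting
`X + Y` for a variable then acts on these coefficients without binomial factors: (i) says that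
the normalised coefficients `F` of `f` form a 3-cocycle in the cobar complex of the divided power
coalgebra, and (ii) relates those of `g` to `F` by a shuffle identity. That complex is acyclic,
with the explicit contraction `H(0, b) = -F(0, 0, b)`, `H(a + 1, b) = F(1, a, b)`. For `g`, the
difference `g - (h - hᵀ)` is then primitive in its first variable, hence supported in degree one
there, and antisymmetric, hence zero in characteristic 0.

In ordinary coefficients `h_{a+1,b} = f_{1,a,b} / (a + 1)`, and `|1/(a+1)|_p ≤ a + 1`: this
polynomial loss is absorbed by the entireness of `f`.
-/

open Finset Nat

namespace DividedPowerCobar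

variable {R : Type*} [CommRing R]

def coboundary₂ (H : ℕ → ℕ → R) (a b c : ℕ) : R :=
  H (a + b) c - (if a = 0 then H b c else 0) - H a (b + c) + (if c = 0 then H a b else 0)

def coboundary₃ (F : ℕ → ℕ → ℕ → R) (a b c d : ℕ) : R :=
  F (a + b) c d - (if a = 0 then F b c d else 0) - F a (b + c) d + F a b (c + d)
    - (if d = 0 then F a b c else 0)

def contraction (F : ℕ → ℕ → ℕ → R) : ℕ → ℕ → R
  | 0, b => -F 0 0 b
  | a + 1, b => F 1 a b

theorem eq_coboundary₂_contraction {F : ℕ → ℕ → ℕ → R}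
    (hF : ∀ a b c d, coboundary₃ F a b c d = 0) : F = coboundary₂ (contraction F) := by
  funext a b c
  cases a with
  | zero =>
    have := hF 0 0 b c
    simp only [coboundary₃, coboundary₂, contraction, zero_add, if_true] at this ⊢
    split_ifs at * <;> linear_combination -this
  | succ a =>
    have := hF 1 a b c
    simp only [coboundary₃, coboundary₂, contraction, add_comm 1 a, add_right_comm a 1 b,
      one_ne_zero, a.succ_ne_zero, if_false] at this ⊢
    split_ifs at * <;> linear_combination this

theorem eq_sub_swap_of_shuffle [NoZeroDivisors R] [CharZero R] {H G : ℕ → ℕ → R}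
    (hG : ∀ a b c, G (a + b) c - (if a = 0 then G b c else 0) - (if b = 0 then G a c else 0)
      = coboundary₂ H a b c - coboundary₂ H a c b + coboundary₂ H c a b)
    (hanti : ∀ a b, G a b + G b a = 0) (a b : ℕ) : G a b = H a b - H b a := by
  set D : ℕ → ℕ → R := fun a b => G a b - H a b + H b a with hD
  have hprim (a b c : ℕ) :
      D (a + b) c = (if a = 0 then D b c else 0) + (if b = 0 then D a c else 0) := by
    have := hG a b c
    simp only [coboundary₂, add_comm c a, add_comm c b] at this
    simp only [hD]
    split_ifs at * <;> linear_combination this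
  have hDanti (a b : ℕ) : D a b + D b a = 0 := by
    simp only [hD]
    linear_combination hanti a b
  have hD_ne_one (a c : ℕ) (ha : a ≠ 1) : D a c = 0 := by
    rcases a with _ | _ | a
    · simpa using hprim 0 0 c
    · exact absurd rfl ha
    · simpa [add_comm 1 (a + 1)] using hprim 1 (a + 1) c
  have hD : D a b = 0 := by
    obtain rfl | ha := eq_or_ne a 1
    · obtain rfl | hb := eq_or_ne b 1
      · exact add_self_eq_zero.mp (hDanti 1 1)
      · linear_combination hDanti 1 b - hD_ne_one b 1 hb
    · exact hD_ne_one a b ha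
  linear_combination hD

end DividedPowerCobar

open DividedPowerCobar

theorem prod_factorial_eq_prod_prod_factorial {n m : ℕ} {s : Fin m → Finset (Fin n)}
    (hs : ∀ j k, j ≠ k → Disjoint (s j) (s k)) {v : Fin n → ℕ}
    (hv : ∀ i ∉ univ.biUnion s, v i = 0) :
    ∏ i, (v i)! = ∏ j, ∏ i ∈ s j, (v i)! := by
  classical
  rw [← prod_biUnion fun j _ k _ => hs j k]
  exact (prod_subset (subset_univ _) fun i _ hi => by rw [hv i hi, factorial_zero]).symm

theorem prod_factorial_cast_ne_zero {K : Type*} [Field K] [CharZero K] {n : ℕ}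
    (v : Fin n → ℕ) : (∏ i, ((v i)! : K)) ≠ 0 :=
  prod_ne_zero_iff.mpr fun i _ => mod_cast (v i).factorial_ne_zero

namespace MvPowerSeries

variable {R : Type*} [CommRing R] {n m : ℕ}

noncomputable def dividedCoeff (v : Fin n → ℕ) : MvPowerSeries (Fin n) R →ₗ[R] R :=
  (∏ i, ((v i)! : R)) • coeff (Finsupp.equivFunOnFinite.symm v)

theorem dividedCoeff_apply (v : Fin n → ℕ) (F : MvPowerSeries (Fin n) R) :
    dividedCoeff v F = (∏ i, ((v i)! : R)) * coeff (Finsupp.equivFunOnFinite.symm v) F :=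
  rfl

theorem dividedCoeff_substAdd {s : Fin m → Finset (Fin n)}
    (hs : ∀ j k, j ≠ k → Disjoint (s j) (s k)) (F : MvPowerSeries (Fin m) R) (v : Fin n → ℕ)
    {w : Fin m → ℕ} (hw : ∀ j, ∑ i ∈ s j, v i = w j) :
    dividedCoeff v (substAdd s F) =
      if ∀ i ∉ univ.biUnion s, v i = 0 then dividedCoeff w F else 0 := by
  have hsupp : (Finsupp.equivFunOnFinite.symm v).support ⊆ univ.biUnion s ↔
      ∀ i ∉ univ.biUnion s, v i = 0 := by
    simp only [← Finset.coe_subset, Finsupp.support_subset_iff, Finset.mem_coe]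
    rfl
  rw [dividedCoeff_apply, coeff_apply, substAdd]
  simp only [hsupp]
  split_ifs with hv
  · have hw' : (fun j => ∑ i ∈ s j, Finsupp.equivFunOnFinite.symm v i) = w := funext hw
    rw [hw', dividedCoeff_apply, ← mul_assoc]
    congr 1
    rw [← hw']
    simp only [Finsupp.coe_equivFunOnFinite_symm]
    rw_mod_cast [prod_factorial_eq_prod_prod_factorial hs hv, ← prod_mul_distrib]
    simp only [multinomial_spec]
  · rw [mul_zero]

noncomputable def dividedCoeff₂ (g : MvPowerSeries (Fin 2) R) (a b : ℕ) : R :=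
  dividedCoeff ![a, b] g

noncomputable def dividedCoeff₃ (f : MvPowerSeries (Fin 3) R) (a b c : ℕ) : R :=
  dividedCoeff ![a, b, c] f

theorem dividedCoeff₃_eq (f : MvPowerSeries (Fin 3) R) (a b c : ℕ) :
    dividedCoeff₃ f a b c =
      a ! * b ! * c ! * coeff (Finsupp.equivFunOnFinite.symm ![a, b, c]) f := by
  simp [dividedCoeff₃, dividedCoeff_apply, Fin.prod_univ_three, mul_assoc]

theorem dividedCoeff_substAdd_cocycle (f : MvPowerSeries (Fin 3) R) (a b c d : ℕ) :
    dividedCoeff ![a, b, c, d]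
        (substAdd ![({0, 1} : Finset (Fin 4)), {2}, {3}] f - substAdd ![{1}, {2}, {3}] f
          - substAdd ![{0}, {1, 2}, {3}] f + substAdd ![{0}, {1}, {2, 3}] f
          - substAdd ![{0}, {1}, {2}] f) =
      coboundary₃ (dividedCoeff₃ f) a b c d := by
  simp only [map_sub, map_add]
  rw [dividedCoeff_substAdd (by decide) f _ (w := ![a + b, c, d]) (by simp [Fin.forall_fin_succ]),
    dividedCoeff_substAdd (by decide) f _ (w := ![b, c, d]) (by simp [Fin.forall_fin_succ]),
    dividedCoeff_substAdd (by decide) f _ (w := ![a, b + c, d]) (by simp [Fin.forall_fin_succ]),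
    dividedCoeff_substAdd (by decide) f _ (w := ![a, b, c + d]) (by simp [Fin.forall_fin_succ]),
    dividedCoeff_substAdd (by decide) f _ (w := ![a, b, c]) (by simp [Fin.forall_fin_succ])]
  simp [Fin.forall_fin_succ, coboundary₃, dividedCoeff₃]

theorem dividedCoeff_substAdd_coboundary (h : MvPowerSeries (Fin 2) R) (a b c : ℕ) :
    dividedCoeff ![a, b, c]
        (substAdd ![({0, 1} : Finset (Fin 3)), {2}] h - substAdd ![{1}, {2}] h
          - substAdd ![{0}, {1, 2}] h + substAdd ![{0}, {1}] h) =
      coboundary₂ (dividedCoeff₂ h) a b c := by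
  simp only [map_sub, map_add]
  rw [dividedCoeff_substAdd (by decide) h _ (w := ![a + b, c]) (by simp [Fin.forall_fin_succ]),
    dividedCoeff_substAdd (by decide) h _ (w := ![b, c]) (by simp [Fin.forall_fin_succ]),
    dividedCoeff_substAdd (by decide) h _ (w := ![a, b + c]) (by simp [Fin.forall_fin_succ]),
    dividedCoeff_substAdd (by decide) h _ (w := ![a, b]) (by simp [Fin.forall_fin_succ])]
  simp [Fin.forall_fin_succ, coboundary₂, dividedCoeff₂]

theorem dividedCoeff_substAdd_shuffle (f : MvPowerSeries (Fin 3) R)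
    (g : MvPowerSeries (Fin 2) R) (a b c : ℕ) :
    dividedCoeff ![a, b, c]
        (substAdd ![({0, 1} : Finset (Fin 3)), {2}] g - substAdd ![{1}, {2}] g
          - substAdd ![{0}, {2}] g - f + substAdd ![{0}, {2}, {1}] f
          - substAdd ![{2}, {0}, {1}] f) =
      dividedCoeff₂ g (a + b) c - (if a = 0 then dividedCoeff₂ g b c else 0)
        - (if b = 0 then dividedCoeff₂ g a c else 0)
        - (dividedCoeff₃ f a b c - dividedCoeff₃ f a c b + dividedCoeff₃ f c a b) := by
  simp only [map_sub, map_add]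
  rw [dividedCoeff_substAdd (by decide) g _ (w := ![a + b, c]) (by simp [Fin.forall_fin_succ]),
    dividedCoeff_substAdd (by decide) g _ (w := ![b, c]) (by simp [Fin.forall_fin_succ]),
    dividedCoeff_substAdd (by decide) g _ (w := ![a, c]) (by simp [Fin.forall_fin_succ]),
    dividedCoeff_substAdd (by decide) f _ (w := ![a, c, b]) (by simp [Fin.forall_fin_succ]),
    dividedCoeff_substAdd (by decide) f _ (w := ![c, a, b]) (by simp [Fin.forall_fin_succ])]
  simp [Fin.forall_fin_succ, dividedCoeff₂, dividedCoeff₃]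
  ring

theorem dividedCoeff_substAdd_swap (g : MvPowerSeries (Fin 2) R) (a b : ℕ) :
    dividedCoeff ![a, b] (substAdd ![({1} : Finset (Fin 2)), {0}] g) = dividedCoeff₂ g b a := by
  rw [dividedCoeff_substAdd (by decide) g _ (w := ![b, a]) (by simp [Fin.forall_fin_succ])]
  simp [Fin.forall_fin_succ, dividedCoeff₂]

section Field

variable {K : Type*} [Field K] [CharZero K]

noncomputable def ofDividedCoeff (H : (Fin n → ℕ) → K) : MvPowerSeries (Fin n) K :=
  fun α => H α / ∏ i, ((α i)! : K)

theorem dividedCoeff_ofDividedCoeff (H : (Fin n → ℕ) → K) (v : Fin n → ℕ) :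
    dividedCoeff v (ofDividedCoeff H) = H v := by
  rw [dividedCoeff_apply, coeff_apply, ofDividedCoeff, Finsupp.coe_equivFunOnFinite_symm,
    mul_div_cancel₀ _ (prod_factorial_cast_ne_zero v)]

theorem ext_dividedCoeff {f g : MvPowerSeries (Fin n) K}
    (h : ∀ v, dividedCoeff v f = dividedCoeff v g) : f = g := by
  ext α
  have := h α
  rw [dividedCoeff_apply, dividedCoeff_apply, Finsupp.equivFunOnFinite_symm_coe] at this
  exact mul_left_cancel₀ (prod_factorial_cast_ne_zero α) this

theorem ext_dividedCoeff₂ {f g : MvPowerSeries (Fin 2) K}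
    (h : dividedCoeff₂ f = dividedCoeff₂ g) : f = g :=
  ext_dividedCoeff fun v => by
    rw [(FinVec.etaExpand_eq v).symm]
    exact congrFun₂ h (v 0) (v 1)

theorem ext_dividedCoeff₃ {f g : MvPowerSeries (Fin 3) K}
    (h : dividedCoeff₃ f = dividedCoeff₃ g) : f = g :=
  ext_dividedCoeff fun v => by
    rw [(FinVec.etaExpand_eq v).symm]
    exact congrFun₃ h (v 0) (v 1) (v 2)

end Field

theorem IsEntire.of_norm_coeff_le {C : Type*} [NormedRing C] {f : MvPowerSeries (Fin n) C}
    {h : MvPowerSeries (Fin m) C} (hf : f.IsEntire) (τ : (Fin m →₀ ℕ) → Fin n →₀ ℕ)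
    (hτ : ∀ d, ∑ i, τ d i = ∑ i, d i)
    (hle : ∀ d, ‖coeff d h‖ ≤ (∑ i, d i + 1) * ‖coeff (τ d) f‖) : h.IsEntire := by
  intro r hr ε hε
  obtain ⟨N, hN⟩ := hf (2 * r) (by positivity) ε hε
  refine ⟨N, fun d hd => ?_⟩
  have hpow : ((∑ i, d i : ℕ) + 1 : ℝ) * r ^ (∑ i, d i) ≤ (2 * r) ^ (∑ i, d i) := by
    rw [mul_pow]
    gcongr
    exact_mod_cast Nat.lt_two_pow_self
  calc ‖coeff d h‖ * r ^ (∑ i, d i)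
      ≤ (∑ i, d i + 1) * ‖coeff (τ d) f‖ * r ^ (∑ i, d i) := by gcongr; exact hle d
    _ = ‖coeff (τ d) f‖ * ((∑ i, d i + 1) * r ^ (∑ i, d i)) := by ring
    _ ≤ ‖coeff (τ d) f‖ * (2 * r) ^ (∑ i, d i) := by gcongr
    _ < ε := by rw [← hτ d] at hd ⊢; exact hN (τ d) hd

-- The index on the right is `(0, 0, b)` for `d = (0, b)` and `(1, a, b)` for `d = (a + 1, b)`.
theorem norm_coeff_ofDividedCoeff_contraction_le {K : Type*} [NormedField K] [CharZero K]
    (hinv : ∀ k : ℕ, ‖((k + 1 : ℕ) : K)⁻¹‖ ≤ k + 1) (f : MvPowerSeries (Fin 3) K)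
    (d : Fin 2 →₀ ℕ) :
    ‖coeff d (ofDividedCoeff fun v => contraction (dividedCoeff₃ f) (v 0) (v 1))‖ ≤
      (∑ i, d i + 1) *
        ‖coeff (Finsupp.equivFunOnFinite.symm ![min (d 0) 1, d 0 - 1, d 1]) f‖ := by
  rw [coeff_apply, ofDividedCoeff, Fin.prod_univ_two, Fin.sum_univ_two]
  cases hd : d 0 with
  | zero =>
    have hc : contraction (dividedCoeff₃ f) 0 (d 1) / ((0 ! : ℕ) * ((d 1)! : ℕ) : K) =
        -coeff (Finsupp.equivFunOnFinite.symm ![0, 0, d 1]) f := by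
      rw [contraction, dividedCoeff₃_eq, factorial_zero]
      push_cast
      field_simp [factorial_ne_zero]
    rw [hc, norm_neg]
    exact le_mul_of_one_le_left (norm_nonneg _) (by simp)
  | succ a =>
    have hc : contraction (dividedCoeff₃ f) (a + 1) (d 1) /
          (((a + 1)! : ℕ) * ((d 1)! : ℕ) : K) =
        ((a + 1 : ℕ) : K)⁻¹ * coeff (Finsupp.equivFunOnFinite.symm ![1, a, d 1]) f := by
      rw [contraction, dividedCoeff₃_eq, factorial_one, factorial_succ a]
      push_cast
      field_simp [factorial_ne_zero]
    rw [hc, norm_mul, show min (a + 1) 1 = 1 by omega, add_tsub_cancel_right]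
    gcongr
    calc ‖((a + 1 : ℕ) : K)⁻¹‖ ≤ a + 1 := hinv a
      _ ≤ (a + 1 + d 1 : ℕ) + 1 := by push_cast; linarith

end MvPowerSeries

theorem Padic.inv_natCast_le_norm {p : ℕ} [Fact p.Prime] {k : ℕ} (hk : k ≠ 0) :
    (k : ℝ)⁻¹ ≤ ‖(k : ℚ_[p])‖ := by
  rw [Padic.norm_eq_zpow_neg_valuation (Nat.cast_ne_zero.mpr hk), Padic.valuation_natCast,
    zpow_neg, zpow_natCast]
  exact inv_anti₀ (mod_cast pow_pos (Fact.out : p.Prime).pos _)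
    (mod_cast Nat.le_of_dvd (Nat.pos_of_ne_zero hk) pow_padicValNat_dvd)

theorem norm_inv_natCast_succ_le {p : ℕ} [Fact p.Prime] {C : Type*} [NormedField C]
    [Algebra ℚ_[p] C] (hisom : ∀ q : ℚ_[p], ‖algebraMap ℚ_[p] C q‖ = ‖q‖) (k : ℕ) :
    ‖((k + 1 : ℕ) : C)⁻¹‖ ≤ k + 1 := by
  rw [norm_inv, ← map_natCast (algebraMap ℚ_[p] C), hisom]
  calc ‖((k + 1 : ℕ) : ℚ_[p])‖⁻¹ ≤ ((k + 1 : ℕ) : ℝ)⁻¹⁻¹ :=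
        inv_anti₀ (by positivity) (Padic.inv_natCast_le_norm k.succ_ne_zero)
    _ = k + 1 := by push_cast; rw [inv_inv]

theorem entire_three_cocycle_is_coboundary_general
    {p : ℕ} [Fact p.Prime]
    (C : Type*) [NormedField C]
    [Algebra ℚ_[p] C]
    (hisom : ∀ q : ℚ_[p], ‖algebraMap ℚ_[p] C q‖ = ‖q‖)
    (f : MvPowerSeries (Fin 3) C) (g : MvPowerSeries (Fin 2) C)
    (hf : f.IsEntire)
    (h1 : substAdd ![({0, 1} : Finset (Fin 4)), {2}, {3}] f - substAdd ![{1}, {2}, {3}] f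
        - substAdd ![{0}, {1, 2}, {3}] f + substAdd ![{0}, {1}, {2, 3}] f
        - substAdd ![{0}, {1}, {2}] f = 0)
    (h2 : substAdd ![({0, 1} : Finset (Fin 3)), {2}] g - substAdd ![{1}, {2}] g
        - substAdd ![{0}, {2}] g - f + substAdd ![{0}, {2}, {1}] f
        - substAdd ![{2}, {0}, {1}] f = 0)
    (h4 : g + substAdd ![({1} : Finset (Fin 2)), {0}] g = 0) :
    ∃ h : MvPowerSeries (Fin 2) C, h.IsEntire ∧
      f = substAdd ![({0, 1} : Finset (Fin 3)), {2}] h - substAdd ![{1}, {2}] h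
          - substAdd ![{0}, {1, 2}] h + substAdd ![{0}, {1}] h ∧
      g = h - substAdd ![({1} : Finset (Fin 2)), {0}] h := by
  have : CharZero C := charZero_of_injective_algebraMap (algebraMap ℚ_[p] C).injective
  have hcocycle (a b c d : ℕ) : coboundary₃ (dividedCoeff₃ f) a b c d = 0 := by
    rw [← dividedCoeff_substAdd_cocycle, h1, map_zero]
  set h := ofDividedCoeff fun v : Fin 2 → ℕ => contraction (dividedCoeff₃ f) (v 0) (v 1)
  have hh : dividedCoeff₂ h = contraction (dividedCoeff₃ f) :=
    funext₂ fun a b => dividedCoeff_ofDividedCoeff _ _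
  have hf_eq : dividedCoeff₃ f = coboundary₂ (dividedCoeff₂ h) :=
    hh ▸ eq_coboundary₂_contraction hcocycle
  have hg_eq (a b : ℕ) : dividedCoeff₂ g a b = dividedCoeff₂ h a b - dividedCoeff₂ h b a := by
    refine eq_sub_swap_of_shuffle (fun a b c => ?_) (fun a b => ?_) a b
    · have := dividedCoeff_substAdd_shuffle f g a b c
      rw [h2, map_zero, hf_eq] at this
      linear_combination -this
    · rw [← dividedCoeff_substAdd_swap g a b, dividedCoeff₂, ← map_add, h4, map_zero]
  refine ⟨h, ?_, ext_dividedCoeff₃ ?_, ext_dividedCoeff₂ ?_⟩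
  · refine IsEntire.of_norm_coeff_le hf _ (fun d => ?_)
      (norm_coeff_ofDividedCoeff_contraction_le (norm_inv_natCast_succ_le hisom) f)
    simp only [Finsupp.equivFunOnFinite_symm_apply_apply, Fin.sum_univ_three, Fin.sum_univ_two,
      Matrix.cons_val_zero, Matrix.cons_val_one, Matrix.cons_val]
    omega
  · funext a b c
    rw [hf_eq]
    exact (dividedCoeff_substAdd_coboundary h a b c).symm
  · funext a b
    show _ = dividedCoeff ![a, b] (h - _)
    rw [map_sub, dividedCoeff_substAdd_swap, hg_eq]
    rfl

/-- Over `C = ℂ_p` (formalized as a complete algebraically closed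
nonarchimedean normed field with an isometric embedding of `ℚ_p`), entire functions
`f` (three variables) and `g` (two variables) satisfying the stabilized 3-cocycle
relations (i)–(v) are jointly a coboundary: there is an entire two-variable `h` with
`f(X,Y,Z) = h(X+Y,Z) − h(Y,Z) − h(X,Y+Z) + h(X,Y)` and `g(X,Y) = h(X,Y) − h(Y,X)`.
Hypothesis (v), `g(X,X) = 0`, is stated coefficientwise: for each `k`, the sum of the
coefficients of `g` over the antidiagonal `{(a,b) | a + b = k}` vanishes. -/
theorem entire_three_cocycle_is_coboundary
    {p : ℕ} [Fact p.Prime]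
    (C : Type*) [NormedField C] [CompleteSpace C] [IsUltrametricDist C]
    [IsAlgClosed C] [Algebra ℚ_[p] C]
    (hisom : ∀ q : ℚ_[p], ‖algebraMap ℚ_[p] C q‖ = ‖q‖)
    (f : MvPowerSeries (Fin 3) C) (g : MvPowerSeries (Fin 2) C)
    (hf : f.IsEntire) (hg : g.IsEntire)
    (h1 : substAdd ![({0, 1} : Finset (Fin 4)), {2}, {3}] f - substAdd ![{1}, {2}, {3}] f
        - substAdd ![{0}, {1, 2}, {3}] f + substAdd ![{0}, {1}, {2, 3}] f
        - substAdd ![{0}, {1}, {2}] f = 0)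
    (h2 : substAdd ![({0, 1} : Finset (Fin 3)), {2}] g - substAdd ![{1}, {2}] g
        - substAdd ![{0}, {2}] g - f + substAdd ![{0}, {2}, {1}] f
        - substAdd ![{2}, {0}, {1}] f = 0)
    (h3 : substAdd ![({0} : Finset (Fin 3)), {1, 2}] g - substAdd ![{0}, {1}] g
        - substAdd ![{0}, {2}] g + f - substAdd ![{1}, {0}, {2}] f
        + substAdd ![{1}, {2}, {0}] f = 0)
    (h4 : g + substAdd ![({1} : Finset (Fin 2)), {0}] g = 0)
    (h5 : ∀ k : ℕ, ∑ ab ∈ Finset.HasAntidiagonal.antidiagonal k,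
        MvPowerSeries.coeff (Finsupp.equivFunOnFinite.symm ![ab.1, ab.2]) g = 0) :
    ∃ h : MvPowerSeries (Fin 2) C, h.IsEntire ∧
      f = substAdd ![({0, 1} : Finset (Fin 3)), {2}] h - substAdd ![{1}, {2}] h
          - substAdd ![{0}, {1, 2}] h + substAdd ![{0}, {1}] h ∧
      g = h - substAdd ![({1} : Finset (Fin 2)), {0}] h :=
  entire_three_cocycle_is_coboundary_general C hisom f g hf h1 h2 h4
end

section
/- Let f : ℤ_p × ℤ_p → C be a continuous function satisfying f(x+y,z) − f(y,z) − f(x,y+z) + f(x,y) = 0 and f(x,y) = f(y,x) for all x, y, z ∈ ℤ_p. Then there exists a continuous function g : ℤ_p → C such that f(x,y) = g(x+y) − g(x) − g(y) for all x, y ∈ ℤ_p. -/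
/-!
Since the cocycle identity with `z = 1` gives
`f (x, y + 1) = f (x, y) + f (x + y, 1) - f (y, 1)`, a 2-cocycle on `ℤ_[p]` is determined by
`y ↦ f (x, y)` on the dense subset `ℕ`, hence everywhere, once `x ↦ f (x, 1) - f (0, 0)` is
written as a forward difference `G (x + 1) - G x` of a continuous `G`; then `g = G - f (0, 0)`.
Such a `G` exists by Mahler's theorem: its Mahler coefficients are those of
`x ↦ f (x, 1) - f (0, 0)` shifted by one place.
-/

open Filter Topology fwdDiff

namespace PadicInt

variable {p : ℕ} [Fact p.Prime] {E : Type*} [NormedAddCommGroup E] [Module ℤ_[p] E]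
  [IsBoundedSMul ℤ_[p] E] [IsUltrametricDist E] [CompleteSpace E]

theorem exists_continuous_fwdDiff_eq (u : C(ℤ_[p], E)) :
    ∃ G : C(ℤ_[p], E), G 0 = 0 ∧ Δ_[1] ⇑G = u := by
  set a : ℕ → E := fun n => Nat.casesOn n 0 (Δ_[1] ^[·] u 0)
  have ha : Tendsto a atTop (𝓝 0) :=
    (tendsto_add_atTop_iff_nat 1).mp (fwdDiff_tendsto_zero u)
  set G : C(ℤ_[p], E) := mahlerSeries a
  let ΔG : C(ℤ_[p], E) := ⟨Δ_[1] G, (G.continuous.comp (continuous_add_const 1)).sub G.continuous⟩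
  refine ⟨G, fwdDiff_mahlerSeries ha 0, ?_⟩
  have hcoeff : mahlerEquiv E ΔG = mahlerEquiv E u := by
    ext n
    exact fwdDiff_mahlerSeries ha (n + 1)
  exact congrArg DFunLike.coe ((mahlerEquiv E).injective hcoeff)

end PadicInt

theorem cocycle_apply_natCast {M A : Type*} [AddMonoidWithOne M] [AddCommGroup A]
    {f : M × M → A} (hf : ∀ x y z, f (x + y, z) - f (y, z) - f (x, y + z) + f (x, y) = 0)
    {G : M → A} (hG0 : G 0 = 0) (hG : ∀ x, G (x + 1) - G x = f (x, 1) - f (0, 0))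
    (x : M) (n : ℕ) : f (x, n) = f (0, 0) + G (x + n) - G x - G n := by
  induction n with
  | zero =>
    have h := hf x 0 0
    simp only [add_zero] at h
    simp only [Nat.cast_zero, add_zero, hG0]
    linear_combination (norm := abel) h
  | succ n ih =>
    push_cast
    rw [← add_assoc]
    linear_combination (norm := abel) ih - hf x n 1 - hG (x + n) + hG n

theorem continuous_symm_two_cocycle_is_coboundary_general
    {p : ℕ} [Fact p.Prime]
    (C : Type*) [NormedField C] [CompleteSpace C] [IsUltrametricDist C]
    [Algebra ℚ_[p] C]
    (hisom : ∀ q : ℚ_[p], ‖algebraMap ℚ_[p] C q‖ = ‖q‖)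
    (f : ℤ_[p] × ℤ_[p] → C) (hf : Continuous f)
    (hcocycle : ∀ x y z : ℤ_[p], f (x + y, z) - f (y, z) - f (x, y + z) + f (x, y) = 0) :
    ∃ g : ℤ_[p] → C, Continuous g ∧ ∀ x y : ℤ_[p], f (x, y) = g (x + y) - g x - g y := by
  let : Algebra ℤ_[p] C := ((algebraMap ℚ_[p] C).comp PadicInt.Coe.ringHom).toAlgebra
  have : IsBoundedSMul ℤ_[p] C := .of_norm_smul_le fun r x => by
    rw [Algebra.smul_def, norm_mul, PadicInt.norm_def]
    exact (congrArg (· * ‖x‖) (hisom r)).le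
  obtain ⟨G, hG0, hG⟩ := PadicInt.exists_continuous_fwdDiff_eq
    ⟨fun x => f (x, 1) - f (0, 0), by fun_prop⟩
  have hG_nat := cocycle_apply_natCast hcocycle hG0 fun x => congrFun hG x
  have key (x : ℤ_[p]) : (fun y => f (x, y)) = fun y => f (0, 0) + G (x + y) - G x - G y :=
    PadicInt.denseRange_natCast.equalizer (by fun_prop) (by fun_prop) (funext (hG_nat x))
  refine ⟨fun x => G x - f (0, 0), by fun_prop, fun x y => ?_⟩
  rw [congrFun (key x) y]
  ring

/-- Let `p` be a prime and `C = ℂ_p` the completion of an algebraic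
closure of `ℚ_p` (formalized as a complete algebraically closed nonarchimedean normed
field equipped with an isometric embedding of `ℚ_p`).  Every continuous symmetric
2-cocycle `f : ℤ_p × ℤ_p → C` is the coboundary of a continuous `g : ℤ_p → C`. -/
theorem continuous_symm_two_cocycle_is_coboundary
    {p : ℕ} [Fact p.Prime]
    (C : Type*) [NormedField C] [CompleteSpace C] [IsUltrametricDist C]
    [IsAlgClosed C] [Algebra ℚ_[p] C]
    (hisom : ∀ q : ℚ_[p], ‖algebraMap ℚ_[p] C q‖ = ‖q‖)
    (f : ℤ_[p] × ℤ_[p] → C) (hf : Continuous f)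
    (hcocycle : ∀ x y z : ℤ_[p], f (x + y, z) - f (y, z) - f (x, y + z) + f (x, y) = 0)
    (hsymm : ∀ x y : ℤ_[p], f (x, y) = f (y, x)) :
    ∃ g : ℤ_[p] → C, Continuous g ∧ ∀ x y : ℤ_[p], f (x, y) = g (x + y) - g x - g y :=
  continuous_symm_two_cocycle_is_coboundary_general C hisom f hf hcocycle
end

section
/- Let f : ℤ_p × ℤ_p → ℚ_p be a continuous function satisfying f(x+y,z) − f(y,z) − f(x,y+z) + f(x,y) = 0 and f(x,y) = f(y,x) for all x, y, z ∈ ℤ_p. Then there exists a continuous function g : ℤ_p → ℚ_p such that f(x,y) = g(x+y) − g(x) − g(y) for all x, y ∈ ℤ_p. -/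
open Filter Topology

/-- Let `p` be a prime. Every continuous symmetric 2-cocycle
`f : ℤ_p × ℤ_p → ℚ_p` is the coboundary of a continuous function `g : ℤ_p → ℚ_p`. -/
theorem continuous_symm_two_cocycle_is_coboundary_padic
    {p : ℕ} [Fact p.Prime] (f : ℤ_[p] × ℤ_[p] → ℚ_[p]) (hf : Continuous f)
    (hcocycle : ∀ x y z : ℤ_[p], f (x + y, z) - f (y, z) - f (x, y + z) + f (x, y) = 0)
    (hsymm : ∀ x y : ℤ_[p], f (x, y) = f (y, x)) :
    ∃ g : ℤ_[p] → ℚ_[p], Continuous g ∧ ∀ x y : ℤ_[p], f (x, y) = g (x + y) - g x - g y := by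
  classical
  have hp1 : (1 : ℝ) ≤ (p : ℝ) := by
    exact_mod_cast Nat.one_le_iff_ne_zero.mpr (Fact.out : p.Prime).pos.ne'
  set c : ℚ_[p] := f (0, 0) with hc
  set F : ℤ_[p] → ℤ_[p] → ℚ_[p] := fun x y => f (x, y) - c with hFdef
  -- f (x, 0) = c
  have hfx0 : ∀ x : ℤ_[p], f (x, 0) = c := by
    intro x
    have := hcocycle x 0 0
    simp only [add_zero, zero_add] at this
    linear_combination this
  have hF0 : ∀ x : ℤ_[p], F x 0 = 0 := by
    intro x; simp [hFdef, hfx0 x]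
  have hFcoc : ∀ x y z : ℤ_[p], F (x + y) z - F y z - F x (y + z) + F x y = 0 := by
    intro x y z
    have := hcocycle x y z
    simp only [hFdef]
    linear_combination this
  -- the function G on ℕ
  set G : ℕ → ℚ_[p] := fun n => Nat.rec (0 : ℚ_[p]) (fun k acc => acc + F (k : ℤ_[p]) 1) n
    with hGdef
  have hGsucc : ∀ n : ℕ, G (n + 1) = G n + F (n : ℤ_[p]) 1 := fun n => rfl
  have hG0 : G 0 = 0 := rfl
  -- cocycle identity on ℕ
  have hGF : ∀ b a : ℕ, F (a : ℤ_[p]) (b : ℤ_[p]) = G (a + b) - G a - G b := by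
    intro b
    induction b with
    | zero =>
      intro a; push_cast; rw [hF0]; simp [hG0]
    | succ b ih =>
      intro a
      have hrec := hFcoc (a : ℤ_[p]) (b : ℤ_[p]) 1
      have h1 : ((a : ℤ_[p]) + b) = ((a + b : ℕ) : ℤ_[p]) := by push_cast; ring
      have h2 : ((b : ℤ_[p]) + 1) = ((b + 1 : ℕ) : ℤ_[p]) := by push_cast; ring
      rw [h1, h2] at hrec
      have e1 : F ((a + b : ℕ) : ℤ_[p]) 1 = G (a + b + 1) - G (a + b) := by
        rw [hGsucc (a + b)]; ring
      have e2 : F ((b : ℕ) : ℤ_[p]) 1 = G (b + 1) - G b := by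
        rw [hGsucc b]; ring
      have e3 := ih a
      have hidx : a + (b + 1) = a + b + 1 := by omega
      rw [hidx]
      linear_combination (-1 : ℚ_[p]) * hrec + e1 - e2 + e3
  have hGadd : ∀ a b : ℕ, G (a + b) = G a + G b + F (a : ℤ_[p]) (b : ℤ_[p]) := by
    intro a b
    linear_combination - hGF b a
  -- uniform continuity estimate for F
  have huc : ∀ ε : ℝ, 0 < ε →
      ∃ k : ℕ, ∀ (x y : ℤ_[p]), ‖y‖ ≤ (p : ℝ) ^ (-(k : ℤ)) → ‖F x y‖ ≤ ε := by
    intro ε hε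
    have hufc : UniformContinuous f := CompactSpace.uniformContinuous_of_continuous hf
    rw [Metric.uniformContinuous_iff] at hufc
    obtain ⟨δ, hδ, hδf⟩ := hufc ε hε
    obtain ⟨k, hk⟩ := PadicInt.exists_pow_neg_lt p hδ
    refine ⟨k, fun x y hy => ?_⟩
    have hdist : dist (x, y) (x, (0 : ℤ_[p])) < δ := by
      rw [Prod.dist_eq]
      simp only [dist_self, dist_eq_norm, sub_zero]
      exact lt_of_le_of_lt (by simpa using hy) hk
    have := hδf hdist
    rw [dist_eq_norm] at this
    have hFeq : F x y = f (x, y) - f (x, 0) := by rw [hFdef]; simp [hfx0 x]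
    rw [hFeq]
    exact this.le
  -- norms of natural numbers in ℤ_p
  have hnatnorm : ∀ (K : ℕ) (m : ℕ), (p : ℤ) ^ K ∣ (m : ℤ) →
      ‖((m : ℕ) : ℤ_[p])‖ ≤ (p : ℝ) ^ (-(K : ℤ)) := by
    intro K m hdvd
    have : ((m : ℤ) : ℤ_[p]) = ((m : ℕ) : ℤ_[p]) := by push_cast; ring
    rw [← this]
    exact PadicInt.norm_int_le_pow_iff_dvd.mpr hdvd
  have hpowle : ∀ k K : ℕ, k ≤ K → (p : ℝ) ^ (-(K : ℤ)) ≤ (p : ℝ) ^ (-(k : ℤ)) := by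
    intro k K hkK
    apply zpow_le_zpow_right₀ hp1
    omega
  -- key estimate
  have hkey : ∀ ε : ℝ, 0 < ε → ∃ K : ℕ, ∀ a b : ℕ,
      ‖(a : ℤ_[p]) - (b : ℤ_[p])‖ ≤ (p : ℝ) ^ (-(K : ℤ)) → ‖G a - G b‖ ≤ ε := by
    intro ε hε
    obtain ⟨k, hk⟩ := huc ε hε
    -- multiples of small elements with small G value
    have hmul : ∀ s : ℕ, ‖(s : ℤ_[p])‖ ≤ (p : ℝ) ^ (-(k : ℤ)) → ‖G s‖ ≤ ε →
        ∀ t : ℕ, ‖G (t * s)‖ ≤ ε := by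
      intro s hs hGs t
      induction t with
      | zero => simpa [hG0] using hε.le
      | succ t ih =>
        have : (t + 1) * s = t * s + s := by ring
        rw [this, hGadd (t * s) s]
        have hF : ‖F ((t * s : ℕ) : ℤ_[p]) ((s : ℕ) : ℤ_[p])‖ ≤ ε := hk _ _ hs
        calc ‖G (t * s) + G s + F ((t * s : ℕ) : ℤ_[p]) ((s : ℕ) : ℤ_[p])‖
            ≤ max ‖G (t * s) + G s‖ ‖F ((t * s : ℕ) : ℤ_[p]) ((s : ℕ) : ℤ_[p])‖ :=
              Padic.nonarchimedean _ _
          _ ≤ max (max ‖G (t * s)‖ ‖G s‖) ε :=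
              max_le_max (Padic.nonarchimedean _ _) hF
          _ ≤ ε := by
              apply max_le _ le_rfl
              exact max_le ih hGs
    -- contraction estimate
    have hcontract : ∀ s : ℕ, ‖(s : ℤ_[p])‖ ≤ (p : ℝ) ^ (-(k : ℤ)) →
        ∀ t : ℕ, ‖G (t * s) - (t : ℚ_[p]) * G s‖ ≤ ε := by
      intro s hs t
      induction t with
      | zero => simpa [hG0] using hε.le
      | succ t ih =>
        have h1 : (t + 1) * s = t * s + s := by ring
        have h2 : G ((t + 1) * s) - ((t + 1 : ℕ) : ℚ_[p]) * G s =
            (G (t * s) - (t : ℚ_[p]) * G s) + F ((t * s : ℕ) : ℤ_[p]) ((s : ℕ) : ℤ_[p]) := by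
          rw [h1, hGadd (t * s) s]; push_cast; ring
        rw [h2]
        calc ‖(G (t * s) - (t : ℚ_[p]) * G s) + F ((t * s : ℕ) : ℤ_[p]) ((s : ℕ) : ℤ_[p])‖
            ≤ max ‖G (t * s) - (t : ℚ_[p]) * G s‖ ‖F ((t * s : ℕ) : ℤ_[p]) ((s : ℕ) : ℤ_[p])‖ :=
              Padic.nonarchimedean _ _
          _ ≤ ε := max_le ih (hk _ _ hs)
    -- norm of p^k in ℤ_p
    have hpk : ∀ K : ℕ, ‖((p ^ K : ℕ) : ℤ_[p])‖ = (p : ℝ) ^ (-(K : ℤ)) := by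
      intro K
      have : ((p ^ K : ℕ) : ℤ_[p]) = (p : ℤ_[p]) ^ K := by push_cast; ring
      rw [this]
      exact PadicInt.norm_p_pow K
    -- find K ≥ k with ‖G (p^K)‖ ≤ ε
    obtain ⟨j, hj⟩ := PadicInt.exists_pow_neg_lt p
      (div_pos hε (by positivity : (0:ℝ) < ‖G (p ^ k)‖ + 1))
    set K := k + j with hK
    have hkK : k ≤ K := Nat.le_add_right _ _
    have hGpK : ‖G (p ^ K)‖ ≤ ε := by
      have hs : ‖((p ^ k : ℕ) : ℤ_[p])‖ ≤ (p : ℝ) ^ (-(k : ℤ)) := (hpk k).le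
      have hcon := hcontract (p ^ k) hs (p ^ j)
      have heq : p ^ j * p ^ k = p ^ K := by rw [hK]; ring
      rw [heq] at hcon
      have hnorm : ‖((p ^ j : ℕ) : ℚ_[p]) * G (p ^ k)‖ ≤ (p : ℝ) ^ (-(j : ℤ)) * ‖G (p ^ k)‖ := by
        rw [norm_mul]
        apply mul_le_mul_of_nonneg_right _ (norm_nonneg _)
        have : ((p ^ j : ℕ) : ℚ_[p]) = (p : ℚ_[p]) ^ j := by push_cast; ring
        rw [this, Padic.norm_p_pow]
      have hsmall : (p : ℝ) ^ (-(j : ℤ)) * ‖G (p ^ k)‖ ≤ ε := by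
        have h1 : (p : ℝ) ^ (-(j : ℤ)) * ‖G (p ^ k)‖ ≤
            (ε / (‖G (p ^ k)‖ + 1)) * (‖G (p ^ k)‖ + 1) := by
          apply mul_le_mul hj.le (by linarith [norm_nonneg (G (p ^ k))]) (norm_nonneg _)
          positivity
        rw [div_mul_cancel₀] at h1
        · exact h1
        · positivity
      calc ‖G (p ^ K)‖ = ‖(G (p ^ K) - ((p ^ j : ℕ) : ℚ_[p]) * G (p ^ k)) +
              ((p ^ j : ℕ) : ℚ_[p]) * G (p ^ k)‖ := by ring_nf
        _ ≤ max ‖G (p ^ K) - ((p ^ j : ℕ) : ℚ_[p]) * G (p ^ k)‖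
              ‖((p ^ j : ℕ) : ℚ_[p]) * G (p ^ k)‖ := Padic.nonarchimedean _ _
        _ ≤ ε := max_le hcon (hnorm.trans hsmall)
    -- one-sided estimate
    have haux : ∀ a b : ℕ, b ≤ a → ‖(a : ℤ_[p]) - (b : ℤ_[p])‖ ≤ (p : ℝ) ^ (-(K : ℤ)) →
        ‖G a - G b‖ ≤ ε := by
      intro a b hba hab
      obtain ⟨m, rfl⟩ : ∃ m : ℕ, a = b + m := ⟨a - b, by omega⟩
      have hm : ‖((m : ℕ) : ℤ_[p])‖ ≤ (p : ℝ) ^ (-(K : ℤ)) := by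
        have : ((b + m : ℕ) : ℤ_[p]) - (b : ℤ_[p]) = ((m : ℕ) : ℤ_[p]) := by push_cast; ring
        rwa [this] at hab
      -- m is divisible by p^K
      have hdvdZ : (p : ℤ) ^ K ∣ (m : ℤ) := by
        rw [← PadicInt.norm_int_le_pow_iff_dvd]
        have : ((m : ℤ) : ℤ_[p]) = ((m : ℕ) : ℤ_[p]) := by push_cast; ring
        rwa [this]
      have hdvdN : p ^ K ∣ m := by
        have := Int.natCast_dvd_natCast.mp (by exact_mod_cast hdvdZ)
        exact this
      obtain ⟨t, rfl⟩ := hdvdN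
      have hGm : ‖G (p ^ K * t)‖ ≤ ε := by
        rw [mul_comm]
        apply hmul (p ^ K) ((hpk K).le.trans (hpowle k K hkK)) hGpK t
      have heq : G (b + p ^ K * t) - G b = G (p ^ K * t) + F ((b : ℕ) : ℤ_[p])
          ((p ^ K * t : ℕ) : ℤ_[p]) := by
        rw [hGadd b (p ^ K * t)]; ring
      rw [heq]
      have hFsmall : ‖F ((b : ℕ) : ℤ_[p]) ((p ^ K * t : ℕ) : ℤ_[p])‖ ≤ ε := by
        apply hk
        apply le_trans _ (hpowle k K hkK)
        apply hnatnorm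
        exact_mod_cast Dvd.intro t rfl
      calc ‖G (p ^ K * t) + F ((b : ℕ) : ℤ_[p]) ((p ^ K * t : ℕ) : ℤ_[p])‖
          ≤ max ‖G (p ^ K * t)‖ ‖F ((b : ℕ) : ℤ_[p]) ((p ^ K * t : ℕ) : ℤ_[p])‖ :=
            Padic.nonarchimedean _ _
        _ ≤ ε := max_le hGm hFsmall
    refine ⟨K, fun a b hab => ?_⟩
    rcases le_total b a with h | h
    · exact haux a b h hab
    · rw [norm_sub_rev]
      rw [norm_sub_rev] at hab
      exact haux b a h hab
  -- approximation facts
  have happr : ∀ (x : ℤ_[p]) (n : ℕ), ‖x - (x.appr n : ℤ_[p])‖ ≤ (p : ℝ) ^ (-(n : ℤ)) := by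
    intro x n
    rw [PadicInt.norm_le_pow_iff_mem_span_pow]
    exact PadicInt.appr_spec n x
  -- the sequence is Cauchy
  have hcau : ∀ x : ℤ_[p], CauchySeq (fun n => G (x.appr n)) := by
    intro x
    rw [Metric.cauchySeq_iff]
    intro ε hε
    obtain ⟨K, hK⟩ := hkey (ε / 2) (by linarith)
    refine ⟨K, fun m hm n hn => ?_⟩
    have hmn : ‖((x.appr m : ℕ) : ℤ_[p]) - ((x.appr n : ℕ) : ℤ_[p])‖ ≤ (p : ℝ) ^ (-(K : ℤ)) := by
      have h1 : ((x.appr m : ℕ) : ℤ_[p]) - ((x.appr n : ℕ) : ℤ_[p]) =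
          -(x - (x.appr m : ℤ_[p])) + (x - (x.appr n : ℤ_[p])) := by ring
      rw [h1]
      apply le_trans (PadicInt.nonarchimedean _ _)
      apply max_le
      · rw [norm_neg]; exact (happr x m).trans (hpowle K m hm)
      · exact (happr x n).trans (hpowle K n hn)
    have := hK _ _ hmn
    rw [dist_eq_norm]
    linarith [this]
  set g : ℤ_[p] → ℚ_[p] := fun x => limUnder atTop (fun n => G (x.appr n)) with hgdef
  have htend : ∀ x : ℤ_[p], Tendsto (fun n => G (x.appr n)) atTop (𝓝 (g x)) :=
    fun x => (hcau x).tendsto_limUnder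
  have hppos : ∀ K : ℕ, (0:ℝ) < (p : ℝ) ^ (-(K : ℤ)) := by
    intro K; positivity
  -- general limit lemma
  have hGlim : ∀ (z : ℤ_[p]) (u : ℕ → ℕ),
      Tendsto (fun n => ((u n : ℕ) : ℤ_[p])) atTop (𝓝 z) →
      Tendsto (fun n => G (u n)) atTop (𝓝 (g z)) := by
    intro z u hu
    have hdiff : Tendsto (fun n => G (u n) - G (z.appr n)) atTop (𝓝 0) := by
      rw [NormedAddCommGroup.tendsto_nhds_zero]
      intro ε hε
      obtain ⟨K, hK⟩ := hkey (ε / 2) (by linarith)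
      have hev1 : ∀ᶠ n in atTop, ‖((u n : ℕ) : ℤ_[p]) - z‖ ≤ (p : ℝ) ^ (-(K : ℤ)) := by
        have := Metric.tendsto_atTop.mp hu ((p : ℝ) ^ (-(K : ℤ))) (hppos K)
        obtain ⟨N, hN⟩ := this
        filter_upwards [eventually_ge_atTop N] with n hn
        have := hN n hn
        rw [dist_eq_norm] at this
        exact this.le
      filter_upwards [hev1, eventually_ge_atTop K] with n h1 h2
      have hclose : ‖((u n : ℕ) : ℤ_[p]) - ((z.appr n : ℕ) : ℤ_[p])‖ ≤ (p : ℝ) ^ (-(K : ℤ)) := by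
        have heq : ((u n : ℕ) : ℤ_[p]) - ((z.appr n : ℕ) : ℤ_[p]) =
            (((u n : ℕ) : ℤ_[p]) - z) + (z - ((z.appr n : ℕ) : ℤ_[p])) := by ring
        rw [heq]
        apply le_trans (PadicInt.nonarchimedean _ _)
        exact max_le h1 ((happr z n).trans (hpowle K n h2))
      have := hK _ _ hclose
      linarith [this]
    have := hdiff.add (htend z)
    simpa using this
  -- appr tends to x
  have hplim : Tendsto (fun n : ℕ => (p : ℝ) ^ (-(n : ℤ))) atTop (𝓝 0) := by
    have h1 : ∀ n : ℕ, (p : ℝ) ^ (-(n : ℤ)) = ((p : ℝ)⁻¹) ^ n := by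
      intro n
      rw [zpow_neg, zpow_natCast, inv_pow]
    simp only [h1]
    apply tendsto_pow_atTop_nhds_zero_of_lt_one
    · positivity
    · rw [inv_lt_one_iff₀]
      right
      exact_mod_cast (Fact.out : p.Prime).one_lt
  have happrtend : ∀ x : ℤ_[p],
      Tendsto (fun n => ((x.appr n : ℕ) : ℤ_[p])) atTop (𝓝 x) := by
    intro x
    rw [tendsto_iff_norm_sub_tendsto_zero]
    apply squeeze_zero (fun n => norm_nonneg _) (fun n => ?_) hplim
    rw [norm_sub_rev]
    exact happr x n
  -- continuity of g
  have hgcont : Continuous g := by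
    rw [Metric.continuous_iff]
    intro x ε hε
    obtain ⟨K, hK⟩ := hkey (ε / 2) (by linarith)
    refine ⟨(p : ℝ) ^ (-(K : ℤ)), hppos K, fun y hy => ?_⟩
    have hdist : Tendsto (fun n => dist (G (y.appr n)) (G (x.appr n))) atTop
        (𝓝 (dist (g y) (g x))) := (htend y).dist (htend x)
    have hev : ∀ᶠ n in atTop, dist (G (y.appr n)) (G (x.appr n)) ≤ ε / 2 := by
      filter_upwards [eventually_ge_atTop K] with n hn
      rw [dist_eq_norm]
      apply hK
      have heq : ((y.appr n : ℕ) : ℤ_[p]) - ((x.appr n : ℕ) : ℤ_[p]) =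
          (-(y - ((y.appr n : ℕ) : ℤ_[p]))) + ((y - x) + (x - ((x.appr n : ℕ) : ℤ_[p]))) := by
        ring
      rw [heq]
      apply le_trans (PadicInt.nonarchimedean _ _)
      apply max_le
      · rw [norm_neg]; exact (happr y n).trans (hpowle K n hn)
      apply le_trans (PadicInt.nonarchimedean _ _)
      apply max_le
      · rw [← dist_eq_norm] at *; exact hy.le
      · exact (happr x n).trans (hpowle K n hn)
    have := le_of_tendsto hdist hev
    linarith [this]
  -- the coboundary identity
  have hfinal : ∀ x y : ℤ_[p], F x y = g (x + y) - g x - g y := by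
    intro x y
    have hx := happrtend x
    have hy := happrtend y
    have hsum : Tendsto (fun n => (((x.appr n + y.appr n : ℕ)) : ℤ_[p])) atTop (𝓝 (x + y)) := by
      have := hx.add hy
      convert this using 2 with n
      push_cast; ring
    have h1 : Tendsto (fun n => G (x.appr n)) atTop (𝓝 (g x)) := htend x
    have h2 : Tendsto (fun n => G (y.appr n)) atTop (𝓝 (g y)) := htend y
    have h3 : Tendsto (fun n => G (x.appr n + y.appr n)) atTop (𝓝 (g (x + y))) :=
      hGlim (x + y) _ hsum
    have h4 : Tendsto (fun n => F ((x.appr n : ℕ) : ℤ_[p]) ((y.appr n : ℕ) : ℤ_[p]))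
        atTop (𝓝 (F x y)) := by
      have hpair : Tendsto (fun n => (((x.appr n : ℕ) : ℤ_[p]), ((y.appr n : ℕ) : ℤ_[p])))
          atTop (𝓝 (x, y)) := hx.prodMk_nhds hy
      have := ((hf.tendsto (x, y)).comp hpair).sub (tendsto_const_nhds : Tendsto (fun _ : ℕ => c) atTop (𝓝 c))
      simpa [hFdef] using this
    have h5 : Tendsto (fun n => F ((x.appr n : ℕ) : ℤ_[p]) ((y.appr n : ℕ) : ℤ_[p]))
        atTop (𝓝 (g (x + y) - g x - g y)) := by
      have heq : (fun n => F ((x.appr n : ℕ) : ℤ_[p]) ((y.appr n : ℕ) : ℤ_[p])) =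
          fun n => G (x.appr n + y.appr n) - G (x.appr n) - G (y.appr n) := by
        funext n
        exact hGF (y.appr n) (x.appr n)
      rw [heq]
      exact (h3.sub h1).sub h2
    exact tendsto_nhds_unique h4 h5
  refine ⟨fun x => g x - c, hgcont.sub continuous_const, fun x y => ?_⟩
  have := hfinal x y
  simp only [hFdef] at this
  linear_combination this
end

section
/- Let f : ℤ_p³ → C and g : ℤ_p² → C be continuous functions satisfying, for all x, y, z, w ∈ ℤ_p: (i) f(x+y,z,w) − f(y,z,w) − f(x,y+z,w) + f(x,y,z+w) − f(x,y,z) = 0; (ii) g(x+y,z) − g(y,z) − g(x,z) − f(x,y,z) + f(x,z,y) − f(z,x,y) = 0; (iii) g(x,y+z) − g(x,y) − g(x,z) + f(x,y,z) − f(y,x,z) + f(y,z,x) = 0; (iv) g(x,y) + g(y,x) = 0; (v) g(x,x) = 0. Then there exists a continuous function h : ℤ_p² → C such that f(x,y,z) = h(x+y,z) − h(y,z) − h(x,y+z) + h(x,y) and g(x,y) = h(x,y) − h(y,x) for all x, y, z ∈ ℤ_p. -/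
/-!
Let `T (x, y)` be a continuous indefinite sum in `x` of `f (1, x, y)`; it exists by Mahler's
theorem, applied to `x ↦ f (1, x, ·)` in the `ℤ_p`-Banach space `C(ℤ_p, C)`. Telescoping the
cocycle relation along `x = 1 + ⋯ + 1` shows that `h (x, y) = T (x, y) - f (0, 0, y)` has
coboundary `f` at natural `x, y`, hence everywhere by density of `ℕ` in `ℤ_p`. Given `f = δh`,
the relations for `g` say exactly that `g (x, y) - h (x, y) + h (y, x)` is biadditive; a
continuous biadditive map on `ℤ_p` is determined by its value at `(1, 1)`, here
`g (1, 1) = 0`.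
-/

open Finset Filter Topology fwdDiff

theorem fwdDiff_iter_comp_addMonoidHom {M N G : Type*} [AddCommMonoid M] [AddCommMonoid N]
    [AddCommGroup G] (φ : M →+ N) (f : N → G) (h : M) (n : ℕ) :
    (Δ_[h])^[n] (f ∘ φ) = (Δ_[φ h])^[n] f ∘ φ := by
  induction n with
  | zero => rfl
  | succ n ih =>
    ext x
    simp only [Function.iterate_succ_apply', ih, fwdDiff, Function.comp_apply, map_add]

namespace PadicInt

variable {p : ℕ} [Fact p.Prime]

section IndefiniteSum

variable {E : Type*} [NormedAddCommGroup E] [Module ℤ_[p] E] [IsBoundedSMul ℤ_[p] E]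
  [IsUltrametricDist E] [CompleteSpace E]

/-- The witness is the Mahler series with coefficients `Δⁿ S 0`, where `S n = ∑_{i < n} F i`:
these are `0, (Δ⁰ F) 0, (Δ¹ F) 0, …`, which tend to zero by Mahler's theorem. -/
theorem exists_continuous_sum_range (F : C(ℤ_[p], E)) :
    ∃ T : C(ℤ_[p], E), ∀ n : ℕ, T n = ∑ i ∈ range n, F i := by
  set S : ℕ → E := fun n ↦ ∑ i ∈ range n, F i
  have hΔS : Δ_[1] S = F ∘ Nat.castAddMonoidHom ℤ_[p] := by
    ext n; simp [S, fwdDiff, sum_range_succ]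
  have hcoeff : ∀ n, (Δ_[1])^[n + 1] S 0 = (Δ_[1])^[n] F 0 := fun n ↦ by
    rw [Function.iterate_succ_apply, hΔS, fwdDiff_iter_comp_addMonoidHom]
    simp
  have hlim : Tendsto (fun n ↦ (Δ_[1])^[n] S 0) atTop (𝓝 0) :=
    (tendsto_add_atTop_iff_nat 1).mp (by simpa only [hcoeff] using fwdDiff_tendsto_zero F)
  refine ⟨mahlerSeries fun n ↦ (Δ_[1])^[n] S 0, fun n ↦ ?_⟩
  rw [mahlerSeries_apply_nat hlim le_rfl, ← shift_eq_sum_fwdDiff_iter]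
  simp [S]

theorem exists_continuous_sum_range_prod {X : Type*} [TopologicalSpace X] [CompactSpace X]
    [LocallyCompactSpace X] (F : ℤ_[p] × X → E) (hF : Continuous F) :
    ∃ T : ℤ_[p] × X → E, Continuous T ∧
      ∀ (n : ℕ) (x : X), T (n, x) = ∑ i ∈ range n, F (i, x) := by
  obtain ⟨T, hT⟩ := exists_continuous_sum_range (ContinuousMap.curry ⟨F, hF⟩)
  refine ⟨T.uncurry, T.uncurry.continuous, fun n x ↦ ?_⟩
  simpa using congrArg (· x) (hT n)

end IndefiniteSum

variable {G : Type*} [TopologicalSpace G] [T2Space G]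

theorem addMonoidHom_eq_zero_of_map_one [AddMonoid G] (ψ : ℤ_[p] →+ G) (hψ : Continuous ψ)
    (h1 : ψ 1 = 0) : ψ = 0 :=
  DFunLike.coe_injective <| denseRange_natCast.equalizer hψ continuous_const <| funext fun n ↦ by
    change ψ n = 0
    rw [← nsmul_one, map_nsmul, h1, smul_zero]

theorem eq_zero_of_biadditive [AddCommGroup G] {φ : ℤ_[p] × ℤ_[p] → G} (hφ : Continuous φ)
    (add_left : ∀ x y z, φ (x + y, z) = φ (x, z) + φ (y, z))
    (add_right : ∀ x y z, φ (x, y + z) = φ (x, y) + φ (x, z)) (h11 : φ (1, 1) = 0)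
    (x y : ℤ_[p]) : φ (x, y) = 0 := by
  have h1y : ∀ y, φ (1, y) = 0 := fun y ↦ DFunLike.congr_fun
    (addMonoidHom_eq_zero_of_map_one (.mk' (fun y ↦ φ (1, y)) (add_right 1))
      (show Continuous fun y ↦ φ (1, y) by fun_prop) h11) y
  exact DFunLike.congr_fun
    (addMonoidHom_eq_zero_of_map_one (.mk' (fun x ↦ φ (x, y)) fun x x' ↦ add_left x x' y)
      (show Continuous fun x ↦ φ (x, y) by fun_prop) (h1y y)) x

end PadicInt

namespace AbelianCohomology

variable {R G : Type*} [AddCommGroup G]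

section AddCommMonoid

variable [AddCommMonoid R]

def coboundary (h : R × R → G) : R × R × R → G := fun q ↦
  h (q.1 + q.2.1, q.2.2) - h (q.2.1, q.2.2) - h (q.1, q.2.1 + q.2.2) + h (q.1, q.2.1)

theorem continuous_coboundary [TopologicalSpace R] [ContinuousAdd R] [TopologicalSpace G]
    [IsTopologicalAddGroup G] {h : R × R → G} (hh : Continuous h) :
    Continuous (coboundary h) := by
  unfold coboundary
  fun_prop

def alternation (h : R × R → G) : R × R → G := fun q ↦ h q - h q.swap

theorem sub_alternation_add_left {f : R × R × R → G} {g h : R × R → G}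
    (hfh : f = coboundary h)
    (hg : ∀ x y z : R,
      g (x + y, z) - g (y, z) - g (x, z) - f (x, y, z) + f (x, z, y) - f (z, x, y) = 0)
    (x y z : R) :
    (g - alternation h) (x + y, z) = (g - alternation h) (x, z) + (g - alternation h) (y, z) := by
  have := hg x y z
  simp only [hfh, coboundary, add_comm z y, add_comm z x] at this
  simp only [Pi.sub_apply, alternation, Prod.swap_prod_mk]
  linear_combination (norm := module) this

theorem sub_alternation_add_right {f : R × R × R → G} {g h : R × R → G}
    (hfh : f = coboundary h)
    (hg : ∀ x y z : R,
      g (x, y + z) - g (x, y) - g (x, z) + f (x, y, z) - f (y, x, z) + f (y, z, x) = 0)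
    (x y z : R) :
    (g - alternation h) (x, y + z) = (g - alternation h) (x, y) + (g - alternation h) (x, z) := by
  have := hg x y z
  simp only [hfh, coboundary, add_comm y x, add_comm z x] at this
  simp only [Pi.sub_apply, alternation, Prod.swap_prod_mk]
  linear_combination (norm := module) this

end AddCommMonoid

theorem apply_natCast_eq_coboundary [AddCommMonoidWithOne R] {f : R × R × R → G}
    (hf : ∀ x y z w : R,
      f (x + y, z, w) - f (y, z, w) - f (x, y + z, w) + f (x, y, z + w) - f (x, y, z) = 0)
    {T : R × R → G} (hT : ∀ (n : ℕ) (y : R), T (n, y) = ∑ i ∈ range n, f (1, i, y))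
    (n m : ℕ) (z : R) :
    f (n, m, z) = coboundary (fun q ↦ T q - f (0, 0, q.2)) (n, m, z) := by
  have telescope : ∑ j ∈ range n, (f (1, j + m, z) - f (1, j, m + z) + f (1, j, m)) =
      f (n, m, z) - f (0, m, z) := by
    have := sum_range_sub (fun j : ℕ ↦ f (j, m, z)) n
    rw [Nat.cast_zero] at this
    rw [← this]
    refine sum_congr rfl fun j _ ↦ ?_
    have := hf 1 j m z
    rw [add_comm 1 (j : R)] at this
    push_cast
    linear_combination (norm := module) -this
  have shift : T ((n : R) + m, z) - T (m, z) = ∑ j ∈ range n, f (1, j + m, z) := by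
    rw [← Nat.cast_add, hT, hT, add_comm, sum_range_add, add_sub_cancel_left]
    push_cast
    simp only [add_comm]
  have hzero := hf 0 0 m z
  simp only [zero_add] at hzero
  simp only [sum_add_distrib, sum_sub_distrib] at telescope
  simp only [coboundary]
  rw [hT n (m + z), hT n m]
  linear_combination (norm := module) -telescope - shift - hzero

end AbelianCohomology

open AbelianCohomology PadicInt

theorem continuous_three_cocycle_is_coboundary_general
    {p : ℕ} [Fact p.Prime]
    (C : Type*) [NormedField C] [CompleteSpace C] [IsUltrametricDist C]
    [Algebra ℚ_[p] C]
    (hisom : ∀ q : ℚ_[p], ‖algebraMap ℚ_[p] C q‖ = ‖q‖)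
    (f : ℤ_[p] × ℤ_[p] × ℤ_[p] → C) (g : ℤ_[p] × ℤ_[p] → C)
    (hf : Continuous f) (hg : Continuous g)
    (h1 : ∀ x y z w : ℤ_[p],
      f (x + y, z, w) - f (y, z, w) - f (x, y + z, w) + f (x, y, z + w) - f (x, y, z) = 0)
    (h2 : ∀ x y z : ℤ_[p],
      g (x + y, z) - g (y, z) - g (x, z) - f (x, y, z) + f (x, z, y) - f (z, x, y) = 0)
    (h3 : ∀ x y z : ℤ_[p],
      g (x, y + z) - g (x, y) - g (x, z) + f (x, y, z) - f (y, x, z) + f (y, z, x) = 0)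
    (h5 : ∀ x : ℤ_[p], g (x, x) = 0) :
    ∃ h : ℤ_[p] × ℤ_[p] → C, Continuous h ∧
      (∀ x y z : ℤ_[p], f (x, y, z) = h (x + y, z) - h (y, z) - h (x, y + z) + h (x, y)) ∧
      (∀ x y : ℤ_[p], g (x, y) = h (x, y) - h (y, x)) := by
  let _ : Algebra ℤ_[p] C := ((algebraMap ℚ_[p] C).comp (algebraMap ℤ_[p] ℚ_[p])).toAlgebra
  have : IsBoundedSMul ℤ_[p] C := IsBoundedSMul.of_norm_smul_le fun r c ↦ by
    simp [RingHom.smul_toAlgebra, hisom]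
  obtain ⟨T, hTc, hT⟩ := exists_continuous_sum_range_prod
    (fun q : ℤ_[p] × ℤ_[p] ↦ f (1, q)) (by fun_prop)
  set h : ℤ_[p] × ℤ_[p] → C := fun q ↦ T q - f (0, 0, q.2)
  have hh : Continuous h := by fun_prop
  have hfh : f = coboundary h := by
    refine (denseRange_natCast.prodMap (denseRange_natCast.prodMap denseRange_id)).equalizer hf
      (continuous_coboundary hh) (funext fun q ↦ ?_)
    exact apply_natCast_eq_coboundary h1 hT q.1 q.2.1 q.2.2
  refine ⟨h, hh, fun x y z ↦ congrFun hfh (x, y, z), fun x y ↦ sub_eq_zero.mp ?_⟩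
  have hφ : Continuous (g - alternation h) := hg.sub (hh.sub (hh.comp continuous_swap))
  exact eq_zero_of_biadditive hφ (sub_alternation_add_left hfh h2)
    (sub_alternation_add_right hfh h3) (by simp [alternation, h5]) x y

/-- Let `p` be a prime and `C = ℂ_p` the completion of an algebraic
closure of `ℚ_p` (formalized as a complete algebraically closed nonarchimedean normed
field equipped with an isometric embedding of `ℚ_p`).  Continuous functions
`f : ℤ_p³ → C` and `g : ℤ_p² → C` satisfying the (stabilized) 3-cocycle relations are
jointly the coboundary of a continuous `h : ℤ_p² → C`. -/
theorem continuous_three_cocycle_is_coboundary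
    {p : ℕ} [Fact p.Prime]
    (C : Type*) [NormedField C] [CompleteSpace C] [IsUltrametricDist C]
    [IsAlgClosed C] [Algebra ℚ_[p] C]
    (hisom : ∀ q : ℚ_[p], ‖algebraMap ℚ_[p] C q‖ = ‖q‖)
    (f : ℤ_[p] × ℤ_[p] × ℤ_[p] → C) (g : ℤ_[p] × ℤ_[p] → C)
    (hf : Continuous f) (hg : Continuous g)
    (h1 : ∀ x y z w : ℤ_[p],
      f (x + y, z, w) - f (y, z, w) - f (x, y + z, w) + f (x, y, z + w) - f (x, y, z) = 0)
    (h2 : ∀ x y z : ℤ_[p],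
      g (x + y, z) - g (y, z) - g (x, z) - f (x, y, z) + f (x, z, y) - f (z, x, y) = 0)
    (h3 : ∀ x y z : ℤ_[p],
      g (x, y + z) - g (x, y) - g (x, z) + f (x, y, z) - f (y, x, z) + f (y, z, x) = 0)
    (h4 : ∀ x y : ℤ_[p], g (x, y) + g (y, x) = 0)
    (h5 : ∀ x : ℤ_[p], g (x, x) = 0) :
    ∃ h : ℤ_[p] × ℤ_[p] → C, Continuous h ∧
      (∀ x y z : ℤ_[p], f (x, y, z) = h (x + y, z) - h (y, z) - h (x, y + z) + h (x, y)) ∧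
      (∀ x y : ℤ_[p], g (x, y) = h (x, y) - h (y, x)) :=
  continuous_three_cocycle_is_coboundary_general C hisom f g hf hg h1 h2 h3 h5
end

section
/- Let f : ℤ_p³ → ℚ_p and g : ℤ_p² → ℚ_p be continuous functions satisfying, for all x, y, z, w ∈ ℤ_p: (i) f(x+y,z,w) − f(y,z,w) − f(x,y+z,w) + f(x,y,z+w) − f(x,y,z) = 0; (ii) g(x+y,z) − g(y,z) − g(x,z) − f(x,y,z) + f(x,z,y) − f(z,x,y) = 0; (iii) g(x,y+z) − g(x,y) − g(x,z) + f(x,y,z) − f(y,x,z) + f(y,z,x) = 0; (iv) g(x,y) + g(y,x) = 0; (v) g(x,x) = 0. Then there exists a continuous function h : ℤ_p² → ℚ_p such that f(x,y,z) = h(x+y,z) − h(y,z) − h(x,y+z) + h(x,y) and g(x,y) = h(x,y) − h(y,x) for all x, y, z ∈ ℤ_p. -/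
open Finset Filter Topology IsUltrametricDist

section AuxIndefiniteSum

variable {p : ℕ} [hp : Fact p.Prime]

private lemma padic_appr_eq_of_norm_le {k : ℕ} {x x' : ℤ_[p]}
    (h : ‖x' - x‖ ≤ (p : ℝ) ^ (-(k : ℤ))) : x'.appr k = x.appr k := by
  have h1 : ‖x - (x.appr k : ℤ_[p])‖ ≤ (p : ℝ) ^ (-(k : ℤ)) :=
    (PadicInt.norm_le_pow_iff_mem_span_pow _ k).mpr (PadicInt.appr_spec k x)
  have h2 : ‖(x'.appr k : ℤ_[p]) - x'‖ ≤ (p : ℝ) ^ (-(k : ℤ)) := by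
    rw [norm_sub_rev]
    exact (PadicInt.norm_le_pow_iff_mem_span_pow _ k).mpr (PadicInt.appr_spec k x')
  have hd : (p ^ k : ℤ) ∣ (x'.appr k : ℤ) - (x.appr k : ℤ) := by
    rw [← PadicInt.norm_int_le_pow_iff_dvd]
    have : (((x'.appr k : ℤ) - (x.appr k : ℤ) : ℤ) : ℤ_[p])
        = ((x'.appr k : ℤ_[p]) - x') + (x' - x) + (x - (x.appr k : ℤ_[p])) := by
      push_cast; ring
    rw [this]
    refine (norm_add_le_max _ _).trans (max_le ((norm_add_le_max _ _).trans (max_le h2 h)) h1)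
  have hlt : |(x'.appr k : ℤ) - (x.appr k : ℤ)| < (p : ℤ) ^ k := by
    have l1 : (x.appr k : ℤ) < (p : ℤ) ^ k := by exact_mod_cast PadicInt.appr_lt x k
    have l2 : (x'.appr k : ℤ) < (p : ℤ) ^ k := by exact_mod_cast PadicInt.appr_lt x' k
    rw [abs_lt]; omega
  have := Int.eq_zero_of_abs_lt_dvd hd hlt
  omega

private lemma padic_indefinite_sum (G : ℤ_[p] × ℤ_[p] → ℚ_[p]) (hG : Continuous G) :
    ∃ S : ℤ_[p] × ℤ_[p] → ℚ_[p], Continuous S ∧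
      ∀ (m : ℕ) (y : ℤ_[p]), S ((m : ℤ_[p]), y) = ∑ i ∈ range m, G ((i : ℤ_[p]), y) := by
  have hp1 : (1 : ℝ) < (p : ℝ) := by exact_mod_cast hp.out.one_lt
  have hpinv : (p : ℝ)⁻¹ < 1 := inv_lt_one_of_one_lt₀ hp1
  have hpinv0 : (0 : ℝ) ≤ (p : ℝ)⁻¹ := by positivity
  set W : ℕ → ℤ_[p] → ℚ_[p] := fun m y => ∑ i ∈ range m, G ((i : ℤ_[p]), y) with hW
  -- boundedness
  obtain ⟨q₀, -, hq₀⟩ := isCompact_univ.exists_isMaxOn (Set.univ_nonempty)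
    (continuous_norm.comp hG).continuousOn
  set C : ℝ := ‖G q₀‖ with hC
  have hC0 : 0 ≤ C := norm_nonneg _
  have hCb : ∀ q, ‖G q‖ ≤ C := fun q => hq₀ (Set.mem_univ q)
  -- uniform continuity, in arithmetic form
  have hucN : ∀ ε : ℝ, 0 < ε → ∃ N : ℕ, ∀ (a b : ℕ) (y : ℤ_[p]),
      ((p : ℤ) ^ N ∣ (b : ℤ) - (a : ℤ)) → ‖G ((b : ℤ_[p]), y) - G ((a : ℤ_[p]), y)‖ ≤ ε := by
    intro ε hε
    obtain ⟨δ, hδ0, hδ⟩ := Metric.uniformContinuous_iff.mp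
      (CompactSpace.uniformContinuous_of_continuous hG) ε hε
    obtain ⟨N, hN⟩ := exists_pow_lt_of_lt_one hδ0 hpinv
    refine ⟨N, fun a b y hdvd => ?_⟩
    have hnorm : ‖((b : ℤ) - (a : ℤ) : ℤ) • (1 : ℤ_[p])‖ ≤ (p : ℝ) ^ (-(N : ℤ)) := by
      rw [zsmul_eq_mul, mul_one]
      exact PadicInt.norm_int_le_pow_iff_dvd.mpr hdvd
    have hdist : dist (((b : ℤ_[p]), y) : ℤ_[p] × ℤ_[p]) (((a : ℤ_[p]), y)) < δ := by
      rw [Prod.dist_eq]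
      simp only [dist_self]
      refine max_lt ?_ hδ0
      rw [dist_eq_norm]
      calc ‖(b : ℤ_[p]) - (a : ℤ_[p])‖ ≤ (p : ℝ) ^ (-(N : ℤ)) := by
            simpa [zsmul_eq_mul, mul_one] using hnorm
        _ = ((p : ℝ)⁻¹) ^ N := by
            rw [zpow_neg, zpow_natCast, inv_pow]
        _ < δ := hN
    exact le_of_lt (by simpa [dist_eq_norm] using hδ hdist)
  -- shift formula
  have hshift : ∀ (m b : ℕ) (y : ℤ_[p]),
      W (m + b) y - W m y = ∑ i ∈ range b, G (((m + i : ℕ) : ℤ_[p]), y) := by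
    intro m b y
    rw [hW]
    simp only [Finset.sum_range_add]
    push_cast
    ring
  -- single block estimate
  have hblock1 : ∀ (ε : ℝ), 0 < ε → ∃ N : ℕ, ∀ (j m : ℕ) (y : ℤ_[p]),
      ‖W (m + p ^ (N + j)) y - W m y‖ ≤ max (((p : ℝ)⁻¹) ^ j * C) ε := by
    intro ε hε
    obtain ⟨N, hN⟩ := hucN ε hε
    refine ⟨N, fun j => ?_⟩
    induction j with
    | zero =>
      intro m y
      rw [hshift]
      refine le_max_of_le_left ?_
      rw [pow_zero, one_mul]
      exact norm_sum_le_of_forall_le_of_nonneg hC0 (fun i _ => hCb _)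
    | succ j ih =>
      intro m y
      set K := p ^ (N + j) with hK
      have hsplit : W (m + p ^ (N + (j + 1))) y - W m y
          = ∑ q ∈ range p, (W (m + (q + 1) * K) y - W (m + q * K) y) := by
        rw [Finset.sum_range_sub (fun q => W (m + q * K) y)]
        have : m + p * K = m + p ^ (N + (j+1)) := by
          rw [hK, ← pow_succ']
          ring_nf
        simp [this]
      have hterm : ∀ q : ℕ, W (m + (q + 1) * K) y - W (m + q * K) y
          = (W ((m + q * K) + K) y - W (m + q * K) y) := by
        intro q; congr 2; ring
      have hT0 : ‖W (m + K) y - W m y‖ ≤ max (((p : ℝ)⁻¹) ^ j * C) ε := ih m y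
      have hdiff : ∀ q : ℕ, ‖(W ((m + q * K) + K) y - W (m + q * K) y)
          - (W (m + K) y - W m y)‖ ≤ ε := by
        intro q
        rw [hshift, hshift, ← Finset.sum_sub_distrib]
        refine norm_sum_le_of_forall_le_of_nonneg hε.le (fun i _ => ?_)
        refine hN _ _ y ?_
        push_cast
        have : ((m : ℤ) + (q : ℤ) * (K : ℤ) + (i : ℤ)) - ((m : ℤ) + (i : ℤ))
            = (q : ℤ) * (p : ℤ) ^ (N + j) := by rw [hK]; push_cast; ring
        rw [this, pow_add]
        exact Dvd.dvd.mul_left (dvd_mul_right _ _) _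
      rw [hsplit]
      have hdecomp : ∑ q ∈ range p, (W (m + (q + 1) * K) y - W (m + q * K) y)
          = (p : ℚ_[p]) * (W (m + K) y - W m y)
            + ∑ q ∈ range p, ((W ((m + q * K) + K) y - W (m + q * K) y)
                - (W (m + K) y - W m y)) := by
        have heach : ∀ q ∈ range p, W (m + (q + 1) * K) y - W (m + q * K) y
            = (W (m + K) y - W m y) + ((W ((m + q * K) + K) y - W (m + q * K) y)
                - (W (m + K) y - W m y)) := fun q _ => by rw [hterm q]; ring
        rw [Finset.sum_congr rfl heach, Finset.sum_add_distrib, Finset.sum_const, card_range,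
          nsmul_eq_mul]
      rw [hdecomp]
      refine (norm_add_le_max _ _).trans (max_le ?_ ?_)
      · rw [norm_mul, Padic.norm_p]
        calc (p : ℝ)⁻¹ * ‖W (m + K) y - W m y‖ ≤ (p : ℝ)⁻¹ * max (((p : ℝ)⁻¹) ^ j * C) ε :=
              mul_le_mul_of_nonneg_left hT0 hpinv0
          _ ≤ max (((p : ℝ)⁻¹) ^ (j + 1) * C) ε := by
              rw [mul_max_of_nonneg _ _ hpinv0]
              refine max_le (le_max_of_le_left (le_of_eq (by ring))) ?_
              refine le_max_of_le_right ?_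
              nlinarith
      · refine le_max_of_le_right ?_
        exact norm_sum_le_of_forall_le_of_nonneg hε.le (fun q _ => hdiff q)
  -- multi-block estimate
  have hmulti : ∀ (ε : ℝ), 0 < ε → ∃ n₀ : ℕ, ∀ n, n₀ ≤ n → ∀ (m t : ℕ) (y : ℤ_[p]),
      ‖W (m + t * p ^ n) y - W m y‖ ≤ ε := by
    intro ε hε
    obtain ⟨N, hN⟩ := hblock1 ε hε
    obtain ⟨j₀, hj₀⟩ := exists_pow_lt_of_lt_one (div_pos hε (by linarith : (0:ℝ) < C + 1)) hpinv
    have hone : ∀ j, j₀ ≤ j → ((p : ℝ)⁻¹) ^ j * C ≤ ε := by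
      intro j hj
      have h1 : ((p : ℝ)⁻¹) ^ j ≤ ((p : ℝ)⁻¹) ^ j₀ := pow_le_pow_of_le_one hpinv0 hpinv.le hj
      have h2 : ((p : ℝ)⁻¹) ^ j₀ * (C + 1) ≤ ε := by
        rw [← le_div_iff₀ (by linarith : (0:ℝ) < C + 1)]
        exact hj₀.le
      nlinarith [pow_nonneg hpinv0 j, pow_nonneg hpinv0 j₀]
    refine ⟨N + j₀, fun n hn m t y => ?_⟩
    have hsingle : ∀ m' : ℕ, ‖W (m' + p ^ n) y - W m' y‖ ≤ ε := by
      intro m'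
      have hsplitn : n = N + (j₀ + (n - (N + j₀))) := by omega
      have := hN (j₀ + (n - (N + j₀))) m' y
      rw [← hsplitn] at this
      exact this.trans (max_le (hone _ (by omega)) le_rfl)
    induction t with
    | zero => simpa using hε.le
    | succ t iht =>
      have hsp : m + (t + 1) * p ^ n = (m + t * p ^ n) + p ^ n := by ring
      rw [hsp]
      have : W ((m + t * p ^ n) + p ^ n) y - W m y
          = (W ((m + t * p ^ n) + p ^ n) y - W (m + t * p ^ n) y)
            + (W (m + t * p ^ n) y - W m y) := by ring
      rw [this]
      exact (norm_add_le_max _ _).trans (max_le (hsingle _) iht)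
  -- symmetric version
  have hsym : ∀ (ε : ℝ), 0 < ε → ∃ n₀ : ℕ, ∀ n, n₀ ≤ n → ∀ (a b : ℕ) (y : ℤ_[p]),
      ((p : ℤ) ^ n ∣ (a : ℤ) - (b : ℤ)) → ‖W a y - W b y‖ ≤ ε := by
    intro ε hε
    obtain ⟨n₀, hn₀⟩ := hmulti ε hε
    refine ⟨n₀, fun n hn a b y hdvd => ?_⟩
    rcases le_total b a with hba | hab
    · have hdvd' : p ^ n ∣ a - b := by
        have : ((a - b : ℕ) : ℤ) = (a : ℤ) - b := by omega
        exact_mod_cast (by rw [this]; exact_mod_cast hdvd : ((p ^ n : ℕ) : ℤ) ∣ ((a - b : ℕ) : ℤ))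
      obtain ⟨t, ht⟩ := hdvd'
      have : a = b + t * p ^ n := by rw [(Nat.sub_eq_iff_eq_add hba).mp ht]; ring
      rw [this]
      exact hn₀ n hn b t y
    · rw [norm_sub_rev]
      have hdvd' : p ^ n ∣ b - a := by
        have : ((b - a : ℕ) : ℤ) = (b : ℤ) - a := by omega
        have h2 : (p : ℤ) ^ n ∣ (b : ℤ) - a := by
          rw [← neg_sub (a : ℤ) (b : ℤ)]; exact dvd_neg.mpr hdvd
        exact_mod_cast (by rw [this]; exact_mod_cast h2 : ((p ^ n : ℕ) : ℤ) ∣ ((b - a : ℕ) : ℤ))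
      obtain ⟨t, ht⟩ := hdvd'
      have : b = a + t * p ^ n := by rw [(Nat.sub_eq_iff_eq_add hab).mp ht]; ring
      rw [this]
      exact hn₀ n hn a t y
  -- the approximating continuous maps
  have hWc : ∀ m : ℕ, Continuous (fun q : ℤ_[p] × ℤ_[p] => W m q.2) := by
    intro m
    refine continuous_finset_sum _ (fun i _ => hG.comp ?_)
    exact continuous_const.prodMk continuous_snd
  have hFc : ∀ k : ℕ, Continuous (fun q : ℤ_[p] × ℤ_[p] => W (q.1.appr k) q.2) := by
    intro k
    rw [continuous_iff_continuousAt]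
    intro q₀
    have hball : Metric.closedBall q₀.1 ((p : ℝ) ^ (-(k : ℤ))) ∈ 𝓝 q₀.1 :=
      Metric.closedBall_mem_nhds _ (by positivity)
    have h1 : ∀ᶠ x in 𝓝 q₀.1, x.appr k = q₀.1.appr k := by
      filter_upwards [hball] with x hx
      exact padic_appr_eq_of_norm_le (by rw [Metric.mem_closedBall, dist_eq_norm] at hx; exact hx)
    have hev : ∀ᶠ q : ℤ_[p] × ℤ_[p] in 𝓝 q₀, q.1.appr k = q₀.1.appr k :=
      (continuousAt_fst : ContinuousAt Prod.fst q₀).eventually h1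
    refine ContinuousAt.congr ((hWc (q₀.1.appr k)).continuousAt) ?_
    filter_upwards [hev] with q hq
    simp only [hq]
  set Fk : ℕ → C(ℤ_[p] × ℤ_[p], ℚ_[p]) := fun k => ⟨fun q => W (q.1.appr k) q.2, hFc k⟩ with hFk
  have hcauchy : CauchySeq Fk := by
    rw [Metric.cauchySeq_iff']
    intro ε hε
    obtain ⟨n₀, hn₀⟩ := hsym (ε / 2) (by linarith)
    refine ⟨n₀, fun n hn => ?_⟩
    have : dist (Fk n) (Fk n₀) ≤ ε / 2 := by
      rw [ContinuousMap.dist_le (by linarith)]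
      intro q
      rw [dist_eq_norm]
      refine hn₀ n₀ le_rfl _ _ q.2 ?_
      have hmono := PadicInt.appr_mono q.1 hn
      have hdvd := PadicInt.dvd_appr_sub_appr q.1 n₀ n hn
      obtain ⟨c, hc⟩ := hdvd
      have hcast : ((q.1.appr n - q.1.appr n₀ : ℕ) : ℤ)
          = (q.1.appr n : ℤ) - (q.1.appr n₀ : ℤ) := by omega
      have : (q.1.appr n : ℤ) - (q.1.appr n₀ : ℤ) = ((p : ℤ)) ^ n₀ * c := by
        rw [← hcast, hc]; push_cast; ring
      rw [this]
      exact Dvd.intro c rfl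
    linarith
  obtain ⟨L, hL⟩ := cauchySeq_tendsto_of_complete hcauchy
  refine ⟨fun q => L q, L.continuous, fun m y => ?_⟩
  have hT1 : Tendsto (fun k => Fk k ((m : ℤ_[p]), y)) atTop (𝓝 (L ((m : ℤ_[p]), y))) :=
    ((continuous_eval_const (((m : ℤ_[p]), y) : ℤ_[p] × ℤ_[p])).tendsto L).comp hL
  have hT2 : Tendsto (fun k => Fk k ((m : ℤ_[p]), y)) atTop (𝓝 (W m y)) := by
    rw [Metric.tendsto_atTop]
    intro ε hε
    obtain ⟨n₀, hn₀⟩ := hsym (ε / 2) (by linarith)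
    refine ⟨n₀, fun k hk => ?_⟩
    have hdist : dist (Fk k ((m : ℤ_[p]), y)) (W m y) ≤ ε / 2 := by
      have : Fk k ((m : ℤ_[p]), y) = W (((m : ℤ_[p])).appr k) y := rfl
      rw [this, dist_eq_norm]
      refine hn₀ n₀ le_rfl _ _ y ?_
      rw [← PadicInt.norm_int_le_pow_iff_dvd]
      have hsp : ((((m : ℤ_[p])).appr k : ℤ) - (m : ℤ) : ℤ)
          = -((m : ℤ) - ((m : ℤ_[p])).appr k) := by ring
      have hmem := PadicInt.appr_spec k ((m : ℤ_[p]))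
      have h1 : ‖(m : ℤ_[p]) - (((m : ℤ_[p])).appr k : ℤ_[p])‖ ≤ (p : ℝ) ^ (-(k : ℤ)) :=
        (PadicInt.norm_le_pow_iff_mem_span_pow _ k).mpr hmem
      have h2 : ((((((m : ℤ_[p])).appr k : ℤ) - (m : ℤ)) : ℤ) : ℤ_[p])
          = -((m : ℤ_[p]) - (((m : ℤ_[p])).appr k : ℤ_[p])) := by push_cast; ring
      rw [h2, norm_neg]
      refine h1.trans ?_
      have : (-(k:ℤ)) ≤ (-(n₀:ℤ)) := by omega
      exact zpow_le_zpow_right₀ hp1.le this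
    linarith
  exact tendsto_nhds_unique hT1 hT2

end AuxIndefiniteSum

/-- Let `p` be a prime. Continuous functions `f : ℤ_p³ → ℚ_p` and
`g : ℤ_p² → ℚ_p` satisfying the (stabilized) 3-cocycle relations are jointly the
coboundary of a continuous function `h : ℤ_p² → ℚ_p`. -/
theorem continuous_three_cocycle_is_coboundary_padic
    {p : ℕ} [Fact p.Prime]
    (f : ℤ_[p] × ℤ_[p] × ℤ_[p] → ℚ_[p]) (g : ℤ_[p] × ℤ_[p] → ℚ_[p])
    (hf : Continuous f) (hg : Continuous g)
    (h1 : ∀ x y z w : ℤ_[p],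
      f (x + y, z, w) - f (y, z, w) - f (x, y + z, w) + f (x, y, z + w) - f (x, y, z) = 0)
    (h2 : ∀ x y z : ℤ_[p],
      g (x + y, z) - g (y, z) - g (x, z) - f (x, y, z) + f (x, z, y) - f (z, x, y) = 0)
    (h3 : ∀ x y z : ℤ_[p],
      g (x, y + z) - g (x, y) - g (x, z) + f (x, y, z) - f (y, x, z) + f (y, z, x) = 0)
    (h4 : ∀ x y : ℤ_[p], g (x, y) + g (y, x) = 0)
    (h5 : ∀ x : ℤ_[p], g (x, x) = 0) :
    ∃ h : ℤ_[p] × ℤ_[p] → ℚ_[p], Continuous h ∧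
      (∀ x y z : ℤ_[p], f (x, y, z) = h (x + y, z) - h (y, z) - h (x, y + z) + h (x, y)) ∧
      (∀ x y : ℤ_[p], g (x, y) = h (x, y) - h (y, x)) := by
  obtain ⟨S, hScont, hSnat⟩ := padic_indefinite_sum (fun q => f (1, q.1, q.2))
    (hf.comp (continuous_const.prodMk (continuous_fst.prodMk continuous_snd)))
  have hSnat' : ∀ (m : ℕ) (y : ℤ_[p]), S ((m : ℤ_[p]), y) = ∑ i ∈ range m, f (1, (i : ℤ_[p]), y) :=
    fun m y => hSnat m y
  -- the discrete telescoping identity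
  have key : ∀ (a b : ℕ) (z : ℤ_[p]),
      (∑ i ∈ range (a + b), f (1, (i : ℤ_[p]), z)) - (∑ i ∈ range b, f (1, (i : ℤ_[p]), z))
        - (∑ i ∈ range a, f (1, (i : ℤ_[p]), (b : ℤ_[p]) + z))
        + (∑ i ∈ range a, f (1, (i : ℤ_[p]), (b : ℤ_[p])))
      = f ((a : ℤ_[p]), (b : ℤ_[p]), z) - f (0, (b : ℤ_[p]), z) := by
    intro a b z
    induction a with
    | zero => simp
    | succ a ih =>
      rw [show a + 1 + b = (a + b) + 1 by omega, Finset.sum_range_succ,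
        Finset.sum_range_succ (fun i => f (1, (i : ℤ_[p]), (b : ℤ_[p]) + z)),
        Finset.sum_range_succ (fun i => f (1, (i : ℤ_[p]), (b : ℤ_[p])))]
      push_cast
      have hh := h1 1 (a : ℤ_[p]) (b : ℤ_[p]) z
      rw [add_comm (1 : ℤ_[p]) (a : ℤ_[p])] at hh
      linear_combination ih - hh
  -- extension by density
  have hδ₀ : ∀ x y z : ℤ_[p],
      S (x + y, z) - S (y, z) - S (x, y + z) + S (x, y) = f (x, y, z) - f (0, y, z) := by
    have hcont1 : Continuous (fun w : ℤ_[p] × ℤ_[p] × ℤ_[p] =>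
        S (w.1 + w.2.1, w.2.2) - S (w.2.1, w.2.2) - S (w.1, w.2.1 + w.2.2) + S (w.1, w.2.1)) := by
      fun_prop
    have hcont2 : Continuous (fun w : ℤ_[p] × ℤ_[p] × ℤ_[p] => f w - f (0, w.2.1, w.2.2)) := by
      fun_prop
    have hdr : DenseRange (Prod.map (Nat.cast : ℕ → ℤ_[p])
        (Prod.map (Nat.cast : ℕ → ℤ_[p]) (id : ℤ_[p] → ℤ_[p]))) :=
      PadicInt.denseRange_natCast.prodMap (PadicInt.denseRange_natCast.prodMap denseRange_id)
    have heq := hdr.equalizer hcont1 hcont2 ?_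
    · intro x y z
      exact congrFun heq (x, y, z)
    · funext t
      obtain ⟨a, b, z⟩ := t
      simp only [Function.comp_apply, Prod.map_apply, id_eq]
      rw [show (a : ℤ_[p]) + (b : ℤ_[p]) = ((a + b : ℕ) : ℤ_[p]) by push_cast; ring]
      rw [hSnat' (a + b) z, hSnat' b z, hSnat' a ((b : ℤ_[p]) + z), hSnat' a (b : ℤ_[p])]
      linear_combination key a b z
  -- corrected primitive
  set h₀ : ℤ_[p] × ℤ_[p] → ℚ_[p] := fun q => S q - f (0, q.1, q.2) with hh₀
  have h₀cont : Continuous h₀ := by fun_prop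
  have hδ : ∀ x y z : ℤ_[p],
      f (x, y, z) = h₀ (x + y, z) - h₀ (y, z) - h₀ (x, y + z) + h₀ (x, y) := by
    intro x y z
    have e := hδ₀ x y z
    have e2 := h1 0 x y z
    rw [zero_add] at e2
    simp only [hh₀]
    linear_combination -e - e2
  -- the biadditive defect
  have da : ∀ x y z : ℤ_[p], g (x + y, z) - h₀ (x + y, z) + h₀ (z, x + y)
      = (g (x, z) - h₀ (x, z) + h₀ (z, x)) + (g (y, z) - h₀ (y, z) + h₀ (z, y)) := by
    intro x y z
    have e1 := hδ x y z
    have e2 := hδ x z y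
    have e3 := hδ z x y
    rw [add_comm (z : ℤ_[p]) (y : ℤ_[p])] at e2
    rw [add_comm (z : ℤ_[p]) (x : ℤ_[p])] at e3
    linear_combination h2 x y z + e1 - e2 + e3
  have db : ∀ x y z : ℤ_[p], g (x, y + z) - h₀ (x, y + z) + h₀ (y + z, x)
      = (g (x, y) - h₀ (x, y) + h₀ (y, x)) + (g (x, z) - h₀ (x, z) + h₀ (z, x)) := by
    intro x y z
    have e1 := hδ x y z
    have e4 := hδ y x z
    have e5 := hδ y z x
    rw [add_comm (y : ℤ_[p]) (x : ℤ_[p])] at e4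
    rw [add_comm (z : ℤ_[p]) (x : ℤ_[p])] at e5
    linear_combination h3 x y z - e1 + e4 - e5
  have danti : ∀ x y : ℤ_[p],
      (g (x, y) - h₀ (x, y) + h₀ (y, x)) + (g (y, x) - h₀ (y, x) + h₀ (x, y)) = 0 := by
    intro x y
    linear_combination h4 x y
  -- final coboundary
  refine ⟨fun q => h₀ q + (2⁻¹ : ℚ_[p]) * (g q - h₀ q + h₀ (q.2, q.1)), by fun_prop, ?_, ?_⟩
  · intro x y z
    dsimp only
    linear_combination hδ x y z - (2⁻¹ : ℚ_[p]) * da x y z + (2⁻¹ : ℚ_[p]) * db x y z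
  · intro x y
    dsimp only
    linear_combination (2⁻¹ : ℚ_[p]) * danti x y
end

section
/- Let E be a field complete with respect to a nonarchimedean absolute value extending the p-adic absolute value of ℚ_p. For every continuous function f : ℤ_p × ℤ_p → E there exists a unique family (a_{k,l})_{k,l ≥ 0} of elements of E with a_{k,l} → 0 as k + l → ∞ such that f(x,y) = ∑_{k,l ≥ 0} a_{k,l}·binom(x,k)·binom(y,l), the series converging uniformly on ℤ_p × ℤ_p; moreover sup_{(x,y) ∈ ℤ_p²} |f(x,y)| = sup_{k,l} |a_{k,l}|. -/
/-!
The coefficient of `binom(x, k) binom(y, l)` is forced to be the mixed forward difference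
`Δ_y^l Δ_x^k f (0, 0)`: such a difference is a finite combination of point values, so it
commutes with pointwise convergent sums, and on the product basis it picks out a single
coefficient. Applying the one-variable Mahler theorem to `f` as a continuous map
`ℤ_p → C(ℤ_p, E)`, and then to each of its Mahler coefficients, shows that these differences
tend to zero, are bounded by `‖f‖` and determine `f`; so the series they define converges and
its sum, having the same coefficients, is `f`. The reverse bound on `‖f‖` is the ultrametric
inequality.
-/

open Filter Finset PadicInt IsUltrametricDist
open scoped fwdDiff Topology

section fwdDiff

variable {M G : Type*} [AddCommMonoid M] [AddCommGroup G]

theorem map_fwdDiff_iter {G' : Type*} [AddCommGroup G'] (φ : G →+ G') (h : M) (f : M → G)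
    (n : ℕ) (y : M) : φ ((Δ_[h])^[n] f y) = (Δ_[h])^[n] (φ ∘ f) y := by
  simp [fwdDiff_iter_eq_sum_shift, map_sum, map_zsmul]

theorem HasSum.fwdDiff_iter [TopologicalSpace G] [IsTopologicalAddGroup G] {ι : Type*}
    {g : ι → M → G} {F : M → G} (hg : HasSum g F) (h : M) (n : ℕ) :
    HasSum (fun i ↦ (Δ_[h])^[n] (g i)) ((Δ_[h])^[n] F) := by
  induction n with
  | zero => exact hg
  | succ n ih =>
    simp only [Function.iterate_succ_apply']
    exact Pi.hasSum.2 fun y ↦ (Pi.hasSum.1 ih (y + h)).sub (Pi.hasSum.1 ih y)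

end fwdDiff

theorem tendsto_add_cofinite_atTop :
    Tendsto (fun kl : ℕ × ℕ ↦ kl.1 + kl.2) cofinite atTop := by
  rw [← coprod_cofinite, Nat.cofinite_eq_atTop, Filter.coprod, tendsto_sup]
  exact ⟨tendsto_atTop_mono (fun _ ↦ Nat.le_add_right _ _) tendsto_comap,
    tendsto_atTop_mono (fun _ ↦ Nat.le_add_left _ _) tendsto_comap⟩

theorem tendsto_comap_add_atTop_of_rows {F : Type*} [SeminormedAddCommGroup F]
    {g : ℕ × ℕ → F} {r : ℕ → ℝ} (hr : Tendsto r atTop (𝓝 0)) (hle : ∀ k l, ‖g (k, l)‖ ≤ r k)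
    (hrow : ∀ k, Tendsto (fun l ↦ g (k, l)) atTop (𝓝 0)) :
    Tendsto g (comap (fun kl : ℕ × ℕ ↦ kl.1 + kl.2) atTop) (𝓝 0) := by
  rw [NormedAddGroup.tendsto_nhds_zero]
  intro ε hε
  obtain ⟨K, hK⟩ := eventually_atTop.mp (hr.eventually (gt_mem_nhds hε))
  choose L hL using fun k ↦
    eventually_atTop.mp (NormedAddGroup.tendsto_nhds_zero.mp (hrow k) ε hε)
  rw [eventually_comap]
  filter_upwards [eventually_ge_atTop (K + (range K).sup L)] with n hn ⟨k, l⟩ rfl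
  rcases le_or_gt K k with hk | hk
  · exact (hle k l).trans_lt (hK k hk)
  · have : L k ≤ (range K).sup L := le_sup (mem_range.mpr hk)
    exact hL k l (by omega)

theorem ContinuousMap.norm_curry_le {X Y F : Type*} [TopologicalSpace X] [CompactSpace X]
    [TopologicalSpace Y] [CompactSpace Y] [SeminormedAddCommGroup F] (f : C(X × Y, F)) :
    ‖f.curry‖ ≤ ‖f‖ :=
  (ContinuousMap.norm_le _ (norm_nonneg f)).2 fun x ↦
    (ContinuousMap.norm_le _ (norm_nonneg f)).2 fun y ↦ f.norm_coe_le_norm (x, y)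

namespace PadicInt

variable {p : ℕ} [Fact p.Prime]

theorem fwdDiff_iter_mahler_zero (k n : ℕ) :
    (Δ_[1])^[n] ⇑(mahler k : C(ℤ_[p], ℤ_[p])) 0 = (Pi.single k 1 : ℕ → ℤ_[p]) n := by
  have hsingle : Tendsto (Pi.single k 1 : ℕ → ℤ_[p]) atTop (𝓝 0) :=
    tendsto_const_nhds.congr' <| (eventually_gt_atTop k).mono fun n hn ↦
      by simp [Pi.single_eq_of_ne hn.ne']
  have hseries : mahlerSeries (Pi.single k 1 : ℕ → ℤ_[p]) = mahler k := by
    rw [mahlerSeries, tsum_eq_single k fun n hn ↦ by simp [Pi.single_eq_of_ne hn, mahlerTerm],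
      Pi.single_eq_same, mahlerTerm_one]
  rw [← hseries, fwdDiff_mahlerSeries hsingle]

theorem fwdDiff_iter_mahler_smul_zero {G : Type*} [AddCommGroup G] [Module ℤ_[p] G] (w : G)
    (k n : ℕ) : (Δ_[1])^[n] (fun x : ℤ_[p] ↦ mahler k x • w) 0 = (Pi.single k w : ℕ → G) n := by
  rw [show (fun x : ℤ_[p] ↦ mahler k x • w) = (smulAddHom ℤ_[p] G).flip w ∘ mahler k from rfl,
    ← map_fwdDiff_iter, fwdDiff_iter_mahler_zero]
  rcases eq_or_ne n k with rfl | h <;> simp [*]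

noncomputable def mahlerCoeff₂ {G : Type*} [AddCommGroup G] (f : ℤ_[p] × ℤ_[p] → G)
    (kl : ℕ × ℕ) : G :=
  (Δ_[1])^[kl.2] ((Δ_[1])^[kl.1] (Function.curry f) 0) 0

theorem HasSum.mahlerCoeff₂ {G ι : Type*} [AddCommGroup G] [TopologicalSpace G]
    [IsTopologicalAddGroup G] {g : ι → ℤ_[p] × ℤ_[p] → G} {F : ℤ_[p] × ℤ_[p] → G}
    (h : HasSum g F) (kl : ℕ × ℕ) :
    HasSum (fun i ↦ mahlerCoeff₂ (g i) kl) (mahlerCoeff₂ F kl) := by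
  have hcurry : HasSum (fun i ↦ Function.curry (g i)) (Function.curry F) :=
    Pi.hasSum.2 fun x ↦ Pi.hasSum.2 fun y ↦ Pi.hasSum.1 h (x, y)
  have hrow := Pi.hasSum.1 (hcurry.fwdDiff_iter 1 kl.1) 0
  exact Pi.hasSum.1 (hrow.fwdDiff_iter 1 kl.2) 0

theorem mahlerCoeff₂_eq_fwdDiff_iter_curry {G : Type*} [AddCommGroup G] [TopologicalSpace G]
    [IsTopologicalAddGroup G] (f : C(ℤ_[p] × ℤ_[p], G)) (kl : ℕ × ℕ) :
    mahlerCoeff₂ ⇑f kl = (Δ_[1])^[kl.2] ⇑((Δ_[1])^[kl.1] ⇑f.curry 0) 0 := by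
  have hrow : (Δ_[1])^[kl.1] (Function.curry ⇑f) 0 = ⇑((Δ_[1])^[kl.1] ⇑f.curry 0) :=
    (map_fwdDiff_iter ContinuousMap.coeFnAddMonoidHom 1 (⇑f.curry) kl.1 0).symm
  rw [mahlerCoeff₂, hrow]

theorem norm_mahlerCoeff₂_le {G : Type*} [NormedAddCommGroup G] [IsUltrametricDist G]
    (f : C(ℤ_[p] × ℤ_[p], G)) (kl : ℕ × ℕ) : ‖mahlerCoeff₂ ⇑f kl‖ ≤ ‖f‖ := by
  rw [mahlerCoeff₂_eq_fwdDiff_iter_curry]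
  exact (norm_fwdDiff_iter_apply_le 1 _ 0 _).trans
    ((norm_fwdDiff_iter_apply_le 1 f.curry 0 _).trans f.norm_curry_le)

variable {E : Type*} [NormedAddCommGroup E] [Module ℤ_[p] E] [IsBoundedSMul ℤ_[p] E]

noncomputable def mahlerTerm₂ (v : E) (kl : ℕ × ℕ) : C(ℤ_[p] × ℤ_[p], E) where
  toFun xy := (mahler kl.1 xy.1 * mahler kl.2 xy.2) • v
  continuous_toFun := by fun_prop

theorem mahlerTerm₂_apply (v : E) (kl : ℕ × ℕ) (xy : ℤ_[p] × ℤ_[p]) :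
    mahlerTerm₂ v kl xy = (mahler kl.1 xy.1 * mahler kl.2 xy.2) • v :=
  rfl

theorem norm_mahlerTerm₂_apply_le (v : E) (kl : ℕ × ℕ) (xy : ℤ_[p] × ℤ_[p]) :
    ‖mahlerTerm₂ v kl xy‖ ≤ ‖v‖ := by
  refine (norm_smul_le _ _).trans (mul_le_of_le_one_left (norm_nonneg v) ?_)
  rw [norm_mul]
  exact mul_le_one₀ (norm_le_one _) (norm_nonneg _) (norm_le_one _)

theorem norm_mahlerTerm₂_le (v : E) (kl : ℕ × ℕ) : ‖mahlerTerm₂ (p := p) v kl‖ ≤ ‖v‖ :=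
  (ContinuousMap.norm_le _ (norm_nonneg v)).2 (norm_mahlerTerm₂_apply_le v kl)

theorem mahlerCoeff₂_mahlerTerm₂ (v : E) (kl kl' : ℕ × ℕ) :
    mahlerCoeff₂ ⇑(mahlerTerm₂ (p := p) v kl') kl = (Pi.single kl' v : ℕ × ℕ → E) kl := by
  have hcurry : Function.curry ⇑(mahlerTerm₂ (p := p) v kl') =
      fun x ↦ mahler kl'.1 x • fun y ↦ mahler kl'.2 y • v := by
    ext x y
    simp [mahlerTerm₂_apply, mul_smul]
  obtain ⟨k, l⟩ := kl
  obtain ⟨k', l'⟩ := kl'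
  rw [mahlerCoeff₂, hcurry, fwdDiff_iter_mahler_smul_zero]
  rcases eq_or_ne k k' with rfl | hk
  · simp [fwdDiff_iter_mahler_smul_zero, Pi.single_apply]
  · simp [hk, fwdDiff_iter_eq_sum_shift]

theorem mahlerCoeff₂_eq_of_hasSum {b : ℕ × ℕ → E} {F : C(ℤ_[p] × ℤ_[p], E)}
    (h : HasSum (fun kl ↦ mahlerTerm₂ (b kl) kl) F) : mahlerCoeff₂ ⇑F = b := by
  funext kl
  have hpt : HasSum (fun kl' ↦ ⇑(mahlerTerm₂ (b kl') kl')) ⇑F :=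
    Pi.hasSum.2 fun xy ↦ h.mapL (ContinuousMap.evalCLM ℤ_[p] xy)
  have hcoeff := hpt.mahlerCoeff₂ kl
  simp only [mahlerCoeff₂_mahlerTerm₂] at hcoeff
  refine hcoeff.unique ?_
  simpa using hasSum_single (f := fun kl' ↦ (Pi.single kl' (b kl') : ℕ × ℕ → E) kl) kl
    fun kl' h ↦ Pi.single_eq_of_ne h.symm _

theorem hasSum_mahlerTerm₂_iff_tendstoUniformly {b : ℕ × ℕ → E} {F : C(ℤ_[p] × ℤ_[p], E)} :
    HasSum (fun kl ↦ mahlerTerm₂ (b kl) kl) F ↔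
      TendstoUniformly (fun (s : Finset (ℕ × ℕ)) (xy : ℤ_[p] × ℤ_[p]) ↦
        ∑ kl ∈ s, (mahler kl.1 xy.1 * mahler kl.2 xy.2) • b kl) F atTop := by
  rw [HasSum, ContinuousMap.tendsto_iff_tendstoUniformly]
  simp only [ContinuousMap.coe_sum, Finset.sum_apply, mahlerTerm₂_apply]
  rfl

variable [IsUltrametricDist E]

theorem tendsto_mahlerCoeff₂ (f : C(ℤ_[p] × ℤ_[p], E)) :
    Tendsto (mahlerCoeff₂ ⇑f) (comap (fun kl : ℕ × ℕ ↦ kl.1 + kl.2) atTop) (𝓝 0) := by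
  simp_rw [funext (mahlerCoeff₂_eq_fwdDiff_iter_curry f)]
  exact tendsto_comap_add_atTop_of_rows
    (tendsto_zero_iff_norm_tendsto_zero.1 (fwdDiff_tendsto_zero f.curry))
    (fun k l ↦ norm_fwdDiff_iter_apply_le 1 _ 0 l)
    (fun k ↦ fwdDiff_tendsto_zero ((Δ_[1])^[k] ⇑f.curry 0))

variable [CompleteSpace E]

theorem eq_of_forall_fwdDiff_iter_eq {f g : C(ℤ_[p], E)}
    (h : ∀ n, (Δ_[1])^[n] ⇑f 0 = (Δ_[1])^[n] ⇑g 0) : f = g :=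
  (mahlerEquiv E).injective (ZeroAtInftyContinuousMap.ext h)

theorem mahlerCoeff₂_injective :
    Function.Injective fun f : C(ℤ_[p] × ℤ_[p], E) ↦ mahlerCoeff₂ ⇑f := by
  intro f g hfg
  have hrow : ∀ k, (Δ_[1])^[k] ⇑f.curry 0 = (Δ_[1])^[k] ⇑g.curry 0 := fun k ↦
    eq_of_forall_fwdDiff_iter_eq fun l ↦ by
      simpa only [mahlerCoeff₂_eq_fwdDiff_iter_curry] using congr_fun hfg (k, l)
  have hcurry : f.curry = g.curry := eq_of_forall_fwdDiff_iter_eq hrow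
  ext ⟨x, y⟩
  exact DFunLike.congr_fun (DFunLike.congr_fun hcurry x) y

theorem summable_mahlerTerm₂ {b : ℕ × ℕ → E}
    (hb : Tendsto b (comap (fun kl : ℕ × ℕ ↦ kl.1 + kl.2) atTop) (𝓝 0)) :
    Summable fun kl ↦ mahlerTerm₂ (p := p) (b kl) kl := by
  have hb' := hb.mono_left (tendsto_iff_comap.1 tendsto_add_cofinite_atTop)
  exact NonarchimedeanAddGroup.summable_of_tendsto_cofinite_zero <|
    squeeze_zero_norm (fun kl ↦ norm_mahlerTerm₂_le _ kl) (tendsto_zero_iff_norm_tendsto_zero.1 hb')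

theorem hasSum_mahlerTerm₂_mahlerCoeff₂ (f : C(ℤ_[p] × ℤ_[p], E)) :
    HasSum (fun kl ↦ mahlerTerm₂ (mahlerCoeff₂ ⇑f kl) kl) f := by
  have h := (summable_mahlerTerm₂ (p := p) (tendsto_mahlerCoeff₂ f)).hasSum
  rwa [mahlerCoeff₂_injective (mahlerCoeff₂_eq_of_hasSum h)] at h

theorem iSup_norm_eq_iSup_norm_mahlerCoeff₂ (f : C(ℤ_[p] × ℤ_[p], E)) :
    ⨆ xy, ‖f xy‖ = ⨆ kl, ‖mahlerCoeff₂ ⇑f kl‖ := by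
  have hbdd : BddAbove (Set.range fun kl ↦ ‖mahlerCoeff₂ ⇑f kl‖) :=
    ⟨‖f‖, Set.forall_mem_range.2 (norm_mahlerCoeff₂_le f)⟩
  refine le_antisymm (ciSup_le fun xy ↦ ?_) (ciSup_le fun kl ↦ ?_)
  · have hxy := ((hasSum_mahlerTerm₂_mahlerCoeff₂ f).mapL (ContinuousMap.evalCLM ℤ_[p] xy)).tsum_eq
    rw [ContinuousMap.evalCLM_apply] at hxy
    rw [← hxy]
    exact (norm_tsum_le _).trans (ciSup_mono hbdd fun kl ↦ norm_mahlerTerm₂_apply_le _ kl xy)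
  · exact (norm_mahlerCoeff₂_le f kl).trans_eq f.norm_eq_iSup_norm

end PadicInt

open PadicInt in
/-- two-variable Mahler expansion.  Let `E` be a field complete with
respect to a nonarchimedean absolute value extending the `p`-adic absolute value of
`ℚ_p`.  Every continuous `f : ℤ_p × ℤ_p → E` has a unique expansion
`f (x, y) = ∑ a_{k,l} · binom(x,k) · binom(y,l)` with coefficients `a_{k,l} → 0` as
`k + l → ∞`, the series converging uniformly on `ℤ_p × ℤ_p`; moreover the sup norm of
`f` equals the sup of the `‖a_{k,l}‖`.  Here `binom (x, k) = mahler k x` is the `k`-th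
Mahler basis function `ℤ_p → ℚ_p`, viewed in `E` via the embedding `ℚ_p → E`. -/
theorem exists_unique_two_variable_mahler_expansion
    {p : ℕ} [Fact p.Prime]
    (E : Type*) [NormedField E] [CompleteSpace E] [IsUltrametricDist E] [Algebra ℚ_[p] E]
    (hisom : ∀ q : ℚ_[p], ‖algebraMap ℚ_[p] E q‖ = ‖q‖)
    (f : ℤ_[p] × ℤ_[p] → E) (hf : Continuous f) :
    ∃ a : ℕ × ℕ → E,
      (Tendsto a (comap (fun kl : ℕ × ℕ => kl.1 + kl.2) atTop) (nhds 0)) ∧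
      (TendstoUniformly
        (fun (s : Finset (ℕ × ℕ)) (xy : ℤ_[p] × ℤ_[p]) =>
          ∑ kl ∈ s, a kl * algebraMap ℚ_[p] E (mahler kl.1 xy.1 * mahler kl.2 xy.2))
        f atTop) ∧
      ((⨆ xy : ℤ_[p] × ℤ_[p], ‖f xy‖) = ⨆ kl : ℕ × ℕ, ‖a kl‖) ∧
      (∀ b : ℕ × ℕ → E,
        Tendsto b (comap (fun kl : ℕ × ℕ => kl.1 + kl.2) atTop) (nhds 0) →
        TendstoUniformly
          (fun (s : Finset (ℕ × ℕ)) (xy : ℤ_[p] × ℤ_[p]) =>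
            ∑ kl ∈ s, b kl * algebraMap ℚ_[p] E (mahler kl.1 xy.1 * mahler kl.2 xy.2))
          f atTop → b = a) := by
  let _ : Algebra ℤ_[p] E := ((algebraMap ℚ_[p] E).comp (algebraMap ℤ_[p] ℚ_[p])).toAlgebra
  have _ : IsBoundedSMul ℤ_[p] E := .of_norm_smul_le fun r v ↦ le_of_eq <| by
    rw [Algebra.smul_def, norm_mul, RingHom.algebraMap_toAlgebra, RingHom.comp_apply, hisom]
    rfl
  have hsummand (r s : ℤ_[p]) (v : E) : v * algebraMap ℚ_[p] E (r * s) = (r * s) • v := by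
    rw [Algebra.smul_def, mul_comm]
    rfl
  let F : C(ℤ_[p] × ℤ_[p], E) := ⟨f, hf⟩
  simp only [hsummand]
  exact ⟨mahlerCoeff₂ F, tendsto_mahlerCoeff₂ F,
    hasSum_mahlerTerm₂_iff_tendstoUniformly.1 (hasSum_mahlerTerm₂_mahlerCoeff₂ F),
    iSup_norm_eq_iSup_norm_mahlerCoeff₂ F,
    fun b _ hb ↦ (mahlerCoeff₂_eq_of_hasSum (hasSum_mahlerTerm₂_iff_tendstoUniformly.2 hb)).symm⟩
end

section
/- Let R be a perfect commutative ring of characteristic p, and let h ≥ 1 and d ≥ 1 be integers. If x ∈ W(R) satisfies φ^h(x) = p^d·x, or satisfies p^d·φ^h(x) = x, then x = 0. Consequently, for every nonzero integer d, the only element x of the localization W(R)[1/p] with φ^h(x) = p^d·x is x = 0. -/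
/-!
Since every ring endomorphism fixes `p`, an equation `x = p ^ d * f x` with `d ≥ 1` propagates
to `f x`, and iterating it puts `x` in `p ^ n W(R)` for every `n`; as `W(R)` is `p`-adically
separated, `x = 0`. For `p ^ d * φ ^ h x = x` take `f = φ ^ h`; for `φ ^ h x = p ^ d * x` take
`f = φ ^ (-h)`, which exists because `R` is perfect. In `W(R)[1/p]`, clearing the denominator
of `x` by a power of `p` (fixed by `Φ`) reduces to these two cases according to the sign of `e`;
`W(R)` embeds into `W(R)[1/p]` because `p` is a non-zero-divisor of `W(R)`.
-/

open WittVector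

theorem pow_dvd_of_eq_pow_mul_map {S : Type*} [CommSemiring S] (f : S →+* S) {q d : ℕ}
    (hd : 1 ≤ d) {x : S} (hx : x = (q : S) ^ d * f x) (n : ℕ) : (q : S) ^ n ∣ x := by
  induction n generalizing x with
  | zero => simp
  | succ n ih =>
    have hfx : f x = (q : S) ^ d * f (f x) := by
      simpa only [map_mul, map_pow, map_natCast] using congrArg f hx
    rw [hx, pow_succ']
    exact mul_dvd_mul (dvd_pow_self _ (by omega)) (ih hfx)

namespace IsLocalization.Away

variable {S A : Type*} [CommRing S] [CommRing A] [Algebra S A] {q : ℕ}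
  [IsLocalization.Away (q : S) A]

theorem eq_zero_of_map_eq_zpow_mul (hq : (q : S) ∈ nonZeroDivisors S) {g : S →+* S}
    {Ψ : A →+* A} (hΨ : ∀ y, Ψ (algebraMap S A y) = algebraMap S A (g y))
    {u : Aˣ} (hu : (u : A) = algebraMap S A q)
    (h₁ : ∀ m, 1 ≤ m → ∀ a, g a = (q : S) ^ m * a → a = 0)
    (h₂ : ∀ m, 1 ≤ m → ∀ a, (q : S) ^ m * g a = a → a = 0)
    {e : ℤ} (he : e ≠ 0) {x : A} (hx : Ψ x = ↑(u ^ e) * x) : x = 0 := by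
  have hinj : Function.Injective (algebraMap S A) :=
    IsLocalization.injective A (Submonoid.powers_le.2 hq)
  have hΨq : Ψ (algebraMap S A q) = algebraMap S A q := by rw [hΨ, map_natCast]
  obtain ⟨n, a, ha⟩ := surj (q : S) x
  have hΨa : Ψ (algebraMap S A a) = ↑(u ^ e) * algebraMap S A a := by
    rw [← ha, map_mul, map_pow, hΨq, hx, mul_assoc]
  suffices a = 0 by
    rw [this, map_zero] at ha
    exact ((algebraMap_isUnit (q : S)).pow n).mul_left_eq_zero.1 ha
  obtain ⟨m, rfl | rfl⟩ := e.eq_nat_or_neg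
  · refine h₁ m (by omega) a (hinj ?_)
    rw [← hΨ, hΨa, zpow_natCast, Units.val_pow_eq_pow_val, hu, map_mul, map_pow]
  · refine h₂ m (by omega) a (hinj ?_)
    rw [map_mul, ← hΨ, hΨa, map_pow, ← hu, zpow_neg, zpow_natCast, ← Units.val_pow_eq_pow_val,
      ← mul_assoc, Units.mul_inv, one_mul]

end IsLocalization.Away

namespace WittVector

variable {p : ℕ} [Fact p.Prime] {R : Type*} [CommRing R] [CharP R p]

local notation "𝕎" => WittVector p

theorem eq_zero_of_forall_p_pow_dvd {x : 𝕎 R} (hx : ∀ n, (p : 𝕎 R) ^ n ∣ x) : x = 0 := by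
  ext n
  obtain ⟨y, rfl⟩ := hx (n + 1)
  rw [mul_comm, zero_coeff]
  exact mul_pow_charP_coeff_zero y n.lt_succ_self

theorem eq_zero_of_eq_p_pow_mul_map (f : 𝕎 R →+* 𝕎 R) {d : ℕ} (hd : 1 ≤ d)
    {x : 𝕎 R} (hx : x = (p : 𝕎 R) ^ d * f x) : x = 0 :=
  eq_zero_of_forall_p_pow_dvd (pow_dvd_of_eq_pow_mul_map f hd hx)

theorem eq_zero_of_p_pow_mul_iterate_frobenius_eq (h : ℕ) {d : ℕ} (hd : 1 ≤ d)
    {x : 𝕎 R} (hx : (p : 𝕎 R) ^ d * (⇑(frobenius : 𝕎 R →+* 𝕎 R))^[h] x = x) : x = 0 :=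
  eq_zero_of_eq_p_pow_mul_map (frobenius ^ h) hd (by rw [RingHom.coe_pow, hx])

theorem eq_zero_of_iterate_frobenius_eq_p_pow_mul [PerfectRing R p] (h : ℕ) {d : ℕ}
    (hd : 1 ≤ d) {x : 𝕎 R}
    (hx : (⇑(frobenius : 𝕎 R →+* 𝕎 R))^[h] x = (p : 𝕎 R) ^ d * x) : x = 0 := by
  let σ : RingAut (𝕎 R) := frobeniusEquiv p R ^ h
  have hσ : σ x = (p : 𝕎 R) ^ d * x := by
    rw [← hx, RingAut.coe_pow]
    rfl
  refine eq_zero_of_eq_p_pow_mul_map (σ.symm : 𝕎 R →+* 𝕎 R) hd ?_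
  simpa only [RingEquiv.symm_apply_apply, map_mul, map_pow, map_natCast,
    RingEquiv.coe_toRingHom] using congrArg σ.symm hσ

theorem p_mem_nonZeroDivisors [PerfectRing R p] : (p : 𝕎 R) ∈ nonZeroDivisors (𝕎 R) :=
  mem_nonZeroDivisors_iff_right.2 eq_zero_of_p_mul_eq_zero

end WittVector

theorem wittVector_frobenius_eigenvector_eq_zero_general
    {p : ℕ} [hp : Fact p.Prime] {R : Type*} [CommRing R] [CharP R p] [PerfectRing R p]
    (h d : ℕ) (hd : 1 ≤ d)
    (A : Type*) [CommRing A] [Algebra (WittVector p R) A]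
    [IsLocalization.Away ((p : WittVector p R)) A]
    (Φ : A →+* A)
    (hΦ : ∀ y : WittVector p R,
      Φ (algebraMap (WittVector p R) A y) = algebraMap (WittVector p R) A (frobenius y))
    (u : Aˣ) (hu : (u : A) = algebraMap (WittVector p R) A (p : WittVector p R)) :
    (∀ x : WittVector p R, (⇑(frobenius : WittVector p R →+* WittVector p R))^[h] x
        = (p : WittVector p R) ^ d * x → x = 0) ∧
    (∀ x : WittVector p R, (p : WittVector p R) ^ d *
        (⇑(frobenius : WittVector p R →+* WittVector p R))^[h] x = x → x = 0) ∧
    (∀ e : ℤ, e ≠ 0 → ∀ x : A, (⇑Φ)^[h] x = (↑(u ^ e) : A) * x → x = 0) := by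
  refine ⟨fun x => eq_zero_of_iterate_frobenius_eq_p_pow_mul h hd,
    fun x => eq_zero_of_p_pow_mul_iterate_frobenius_eq h hd, fun e he x hx => ?_⟩
  have hΦh (y : WittVector p R) : (Φ ^ h) (algebraMap (WittVector p R) A y) =
      algebraMap (WittVector p R) A (((frobenius : WittVector p R →+* WittVector p R) ^ h) y) :=
    ((Function.Semiconj.iterate_right (fun y => (hΦ y).symm) h) y).symm
  refine IsLocalization.Away.eq_zero_of_map_eq_zpow_mul p_mem_nonZeroDivisors hΦh hu
    (fun m hm a => eq_zero_of_iterate_frobenius_eq_p_pow_mul h hm)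
    (fun m hm a => eq_zero_of_p_pow_mul_iterate_frobenius_eq h hm) he ?_
  rwa [RingHom.coe_pow]

/-- Let `R` be a perfect commutative ring of characteristic `p`, and
`h ≥ 1`, `d ≥ 1`.  Any `x ∈ W(R)` with `φ^h x = p^d · x`, or with `p^d · φ^h x = x`, is
zero; consequently, in the localization `W(R)[1/p]` (with `Φ` the canonical extension of
the Frobenius `φ` and `u` the unit given by the image of `p`), the only solution of
`Φ^h x = p^e · x` with `e` a nonzero integer is `x = 0`. -/
theorem wittVector_frobenius_eigenvector_eq_zero
    {p : ℕ} [hp : Fact p.Prime] {R : Type*} [CommRing R] [CharP R p] [PerfectRing R p]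
    (h d : ℕ) (hh : 1 ≤ h) (hd : 1 ≤ d)
    (A : Type*) [CommRing A] [Algebra (WittVector p R) A]
    [IsLocalization.Away ((p : WittVector p R)) A]
    (Φ : A →+* A)
    (hΦ : ∀ y : WittVector p R,
      Φ (algebraMap (WittVector p R) A y) = algebraMap (WittVector p R) A (frobenius y))
    (u : Aˣ) (hu : (u : A) = algebraMap (WittVector p R) A (p : WittVector p R)) :
    (∀ x : WittVector p R, (⇑(frobenius : WittVector p R →+* WittVector p R))^[h] x
        = (p : WittVector p R) ^ d * x → x = 0) ∧
    (∀ x : WittVector p R, (p : WittVector p R) ^ d *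
        (⇑(frobenius : WittVector p R →+* WittVector p R))^[h] x = x → x = 0) ∧
    (∀ e : ℤ, e ≠ 0 → ∀ x : A, (⇑Φ)^[h] x = (↑(u ^ e) : A) * x → x = 0) :=
  wittVector_frobenius_eigenvector_eq_zero_general (hp := hp) h d hd A Φ hΦ u hu
end

section
/- Let R be a perfect commutative ring of characteristic p and let S = {r ∈ R : r^p = r}, an 𝔽_p-subalgebra of R. An element x ∈ W(R) satisfies φ(x) = x if and only if every Witt component of x lies in S; equivalently, the fixed subring of φ acting on W(R) is exactly the image of the canonical injective ring homomorphism W(S) → W(R). -/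
open WittVector

namespace WittVector

variable {p : ℕ} [Fact p.Prime] {R S : Type*} [CommRing R] [CommRing S]

theorem frobenius_eq_self_iff_coeff_pow_eq [CharP R p] (x : WittVector p R) :
    frobenius x = x ↔ ∀ n, x.coeff n ^ p = x.coeff n := by
  simp only [WittVector.ext_iff, coeff_frobenius_charP]

theorem mem_range_map_iff (f : S →+* R) (x : WittVector p R) :
    x ∈ (map f : WittVector p S →+* WittVector p R).range ↔ ∀ n, x.coeff n ∈ Set.range f := by
  constructor
  · rintro ⟨y, rfl⟩ n
    exact ⟨y.coeff n, (map_coeff f y n).symm⟩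
  · intro hx
    choose y hy using hx
    exact ⟨mk p y, WittVector.ext fun n => by rw [map_coeff, coeff_mk, hy]⟩

theorem mem_range_map_subtype_iff (T : Subring R) (x : WittVector p R) :
    x ∈ (map T.subtype : WittVector p T →+* WittVector p R).range ↔ ∀ n, x.coeff n ∈ T := by
  simp only [mem_range_map_iff, Subring.coe_subtype, Subtype.range_coe_subtype,
    SetLike.setOfPred_mem_eq, SetLike.mem_coe]

end WittVector

theorem wittVector_frobenius_fixed_points_general
    {p : ℕ} [hp : Fact p.Prime] {R : Type*} [CommRing R] [CharP R p] :
    Function.Injective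
      (WittVector.map (R := ((_root_.frobenius R p).eqLocus (RingHom.id R)))
        ((_root_.frobenius R p).eqLocus (RingHom.id R)).subtype
        : WittVector p ((_root_.frobenius R p).eqLocus (RingHom.id R)) → WittVector p R) ∧
    ∀ x : WittVector p R,
      ((frobenius x = x ↔ ∀ n : ℕ, (x.coeff n) ^ p = x.coeff n) ∧
       (frobenius x = x ↔
         x ∈ (WittVector.map
            ((_root_.frobenius R p).eqLocus (RingHom.id R)).subtype).range)) := by
  refine ⟨map_injective _ Subtype.coe_injective,
    fun x => ⟨frobenius_eq_self_iff_coeff_pow_eq x, ?_⟩⟩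
  rw [frobenius_eq_self_iff_coeff_pow_eq, mem_range_map_subtype_iff]
  simp only [RingHom.mem_eqLocus, frobenius_def, RingHom.id_apply]

/-- Let `R` be a perfect commutative ring of characteristic `p` and
`S = {r ∈ R | r ^ p = r}` (the equalizer of the Frobenius of `R` and the identity, an
`𝔽_p`-subalgebra of `R`).  An element `x ∈ W(R)` is fixed by the Witt vector Frobenius
`φ` iff all its Witt components lie in `S`, equivalently iff `x` lies in the image of
the canonical injective ring homomorphism `W(S) → W(R)`. -/
theorem wittVector_frobenius_fixed_points
    {p : ℕ} [hp : Fact p.Prime] {R : Type*} [CommRing R] [CharP R p] [PerfectRing R p] :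
    Function.Injective
      (WittVector.map (R := ((_root_.frobenius R p).eqLocus (RingHom.id R)))
        ((_root_.frobenius R p).eqLocus (RingHom.id R)).subtype
        : WittVector p ((_root_.frobenius R p).eqLocus (RingHom.id R)) → WittVector p R) ∧
    ∀ x : WittVector p R,
      ((frobenius x = x ↔ ∀ n : ℕ, (x.coeff n) ^ p = x.coeff n) ∧
       (frobenius x = x ↔
         x ∈ (WittVector.map
            ((_root_.frobenius R p).eqLocus (RingHom.id R)).subtype).range)) :=
  wittVector_frobenius_fixed_points_general (hp := hp)
end

section
/- Let R be a uniform Banach C-algebra and let x ∈ R be topologically nilpotent (i.e. x^n → 0 as n → ∞). Then the series ∑_{n≥1} (−1)^{n+1} x^n/n converges in R. -/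
/-!
Submultiplicativity turns `‖x ^ N‖ ≤ 1/2` for a single `N ≥ 1` into a geometric bound
`‖x ^ n‖ ≤ K r ^ n` with `r = (1/2) ^ (1/N) < 1`. On the other side, `‖(n : ℚ_[p])⁻¹‖ = p ^ v_p(n) ≤ n`,
so the coefficients of the logarithm grow at most linearly, and `∑ n r ^ n < ∞` dominates the series.
-/

open Filter Finset

theorem Padic.norm_inv_natCast_le {p : ℕ} [Fact p.Prime] (n : ℕ) : ‖(n : ℚ_[p])⁻¹‖ ≤ n := by
  rcases eq_or_ne n 0 with rfl | hn
  · simp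
  rw [norm_inv, Padic.norm_eq_zpow_neg_valuation (Nat.cast_ne_zero.2 hn), Padic.valuation_natCast,
    zpow_neg, inv_inv, zpow_natCast]
  exact_mod_cast Nat.le_of_dvd (Nat.pos_of_ne_zero hn) pow_padicValNat_dvd

section NormedRing

variable {R : Type*} [NormedRing R]

theorem norm_pow_mul_add_le (x : R) (N q s : ℕ) : ‖x ^ (N * q + s)‖ ≤ ‖x ^ N‖ ^ q * ‖x ^ s‖ := by
  rcases Nat.eq_zero_or_pos q with rfl | hq
  · simp
  calc ‖x ^ (N * q + s)‖ = ‖(x ^ N) ^ q * x ^ s‖ := by rw [pow_add, pow_mul]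
    _ ≤ ‖(x ^ N) ^ q‖ * ‖x ^ s‖ := norm_mul_le _ _
    _ ≤ ‖x ^ N‖ ^ q * ‖x ^ s‖ := by gcongr; exact norm_pow_le' _ hq

theorem IsTopologicallyNilpotent.exists_norm_pow_le_mul_geometric {x : R}
    (hx : IsTopologicallyNilpotent x) :
    ∃ K r : ℝ, 0 ≤ r ∧ r < 1 ∧ ∀ n, ‖x ^ n‖ ≤ K * r ^ n := by
  obtain ⟨N, hN, hN0⟩ : ∃ N, ‖x ^ N‖ < 1 / 2 ∧ N ≠ 0 :=
    ((tendsto_zero_iff_norm_tendsto_zero.1 hx).eventually (gt_mem_nhds (by norm_num))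
      |>.and (eventually_ne_atTop 0)).exists
  set r : ℝ := (1 / 2) ^ (N⁻¹ : ℝ)
  have hrN : r ^ N = 1 / 2 := Real.rpow_inv_natCast_pow (by norm_num) hN0
  have hr0 : 0 ≤ r := by positivity
  have hr1 : r < 1 := Real.rpow_lt_one (by norm_num) (by norm_num) (by positivity)
  set M := ∑ s ∈ range N, ‖x ^ s‖
  have hM : 0 ≤ M := sum_nonneg fun _ _ => norm_nonneg _
  refine ⟨2 * M, r, hr0, hr1, fun n => ?_⟩
  obtain ⟨q, s, hs, rfl⟩ : ∃ q s, s < N ∧ n = N * q + s :=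
    ⟨n / N, n % N, Nat.mod_lt _ (Nat.pos_of_ne_zero hN0), (Nat.div_add_mod n N).symm⟩
  calc ‖x ^ (N * q + s)‖ ≤ ‖x ^ N‖ ^ q * ‖x ^ s‖ := norm_pow_mul_add_le x N q s
    _ ≤ (1 / 2) ^ q * M := by
        gcongr
        exact single_le_sum (fun i _ => norm_nonneg (x ^ i)) (mem_range.2 hs)
    _ = 2 * M * r ^ (N * (q + 1)) := by rw [pow_mul, hrN]; ring
    _ ≤ 2 * M * r ^ (N * q + s) := by
        gcongr 2 * M * ?_
        exact pow_le_pow_of_le_one hr0 hr1.le (by rw [Nat.mul_succ]; omega)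

theorem IsTopologicallyNilpotent.summable_smul_pow {𝕜 : Type*} [NormedField 𝕜] [NormedSpace 𝕜 R]
    [CompleteSpace R] {x : R} (hx : IsTopologicallyNilpotent x) {a : ℕ → 𝕜} (k : ℕ)
    (ha : ∀ n, ‖a n‖ ≤ (n : ℝ) ^ k) :
    Summable fun n => a n • x ^ n := by
  obtain ⟨K, r, hr0, hr1, hKr⟩ := hx.exists_norm_pow_le_mul_geometric
  have hgeom : Summable fun n : ℕ => K * ((n : ℝ) ^ k * r ^ n) :=
    (summable_pow_mul_geometric_of_norm_lt_one k (by rwa [Real.norm_of_nonneg hr0])).mul_left K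
  refine Summable.of_norm_bounded hgeom fun n => ?_
  calc ‖a n • x ^ n‖ ≤ ‖a n‖ * ‖x ^ n‖ := norm_smul_le _ _
    _ ≤ (n : ℝ) ^ k * (K * r ^ n) := by gcongr; exacts [ha n, hKr n]
    _ = K * ((n : ℝ) ^ k * r ^ n) := by ring

end NormedRing

theorem summable_log_series_of_topologically_nilpotent_general
    {p : ℕ} [Fact p.Prime]
    (C : Type*) [NormedField C] [Algebra ℚ_[p] C]
    (hisom : ∀ q : ℚ_[p], ‖algebraMap ℚ_[p] C q‖ = ‖q‖)
    (R : Type*) [NormedRing R] [CompleteSpace R] [NormedAlgebra C R]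
    (x : R) (hx : Filter.Tendsto (fun n : ℕ => x ^ n) Filter.atTop (nhds 0)) :
    Summable (fun n : ℕ => ((-1 : C) ^ (n + 1) * ((n : C))⁻¹) • x ^ n) := by
  refine IsTopologicallyNilpotent.summable_smul_pow hx 1 fun n => ?_
  have hcoef : ‖((n : C))⁻¹‖ ≤ n := by
    rw [← map_natCast (algebraMap ℚ_[p] C), ← map_inv₀, hisom]
    exact Padic.norm_inv_natCast_le n
  simpa using hcoef

/-- Let `C = ℂ_p` (formalized as a complete algebraically closed
nonarchimedean normed field with an isometric embedding of `ℚ_p`) and let `R` be a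
uniform Banach `C`-algebra (uniform: the set of power-bounded elements is bounded).
For every topologically nilpotent `x ∈ R` the logarithm series
`∑_{n ≥ 1} (−1)^(n+1) xⁿ/n` converges in `R` (the `n = 0` term below is zero since
`(0 : C)⁻¹ = 0`). -/
theorem summable_log_series_of_topologically_nilpotent
    {p : ℕ} [Fact p.Prime]
    (C : Type*) [NormedField C] [CompleteSpace C] [IsUltrametricDist C]
    [IsAlgClosed C] [Algebra ℚ_[p] C]
    (hisom : ∀ q : ℚ_[p], ‖algebraMap ℚ_[p] C q‖ = ‖q‖)
    (R : Type*) [NormedRing R] [CompleteSpace R] [NormedAlgebra C R]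
    (huniform : Bornology.IsBounded {x : R | ∃ M : ℝ, ∀ n : ℕ, ‖x ^ n‖ ≤ M})
    (x : R) (hx : Filter.Tendsto (fun n : ℕ => x ^ n) Filter.atTop (nhds 0)) :
    Summable (fun n : ℕ => ((-1 : C) ^ (n + 1) * ((n : C))⁻¹) • x ^ n) :=
  summable_log_series_of_topologically_nilpotent_general C hisom R x hx
end

section
/- Let O_C be the valuation ring of C, let O_C⟨T^{1/p^∞}⟩ denote the p-adic completion of the increasing union ⋃_{n≥0} O_C[T^{1/p^n}] of polynomial rings in the p-power roots of a variable T, and let C⟨T^{1/p^∞}⟩ = O_C⟨T^{1/p^∞}⟩[1/p]. Let a ∈ O_C satisfy |p| < |a|. Then the element 1 + aT admits no p-th root in C⟨T^{1/p^∞}⟩: there is no y ∈ C⟨T^{1/p^∞}⟩ with y^p = 1 + aT. -/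
/-!
Write `y = ∑ y_q T^q`. Rotating `p`-tuples of exponents, every orbit other than that of the constant
tuple has exactly `p` elements, so the coefficient of `T^q` in `y^p` is `y_{q/p}^p` plus `p` times
a sum of products of coefficients. Comparing with `1 + aT` first shows `|y_q| ≤ 1` for all `q`,
then `|y_{1/p}|^p = |a|`, and inductively `|y_{p^{-n-1}}|^p = |p| |y_{p^{-n}}|`: the orbit of
`(p^{-n}, 0, …, 0)` contributes `p y_{p^{-n}} y_0^{p-1}`, which dominates all other orbits. Hence
`|y_{p^{-n}}| > |p|` for every `n`, contradicting `y_q → 0`.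
-/

/-- The exponent monoid `ℕ[1/p] = {m/pⁿ} ⊆ ℚ≥0` of the ring `O_C⟨T^{1/p^∞}⟩`. -/
abbrev PadicFracExp (p : ℕ) : Type := {q : ℚ // 0 ≤ q ∧ ∃ n m : ℕ, q * (p : ℚ) ^ n = (m : ℚ)}

open Filter Topology

theorem Filter.Tendsto.finite_setOf_le_norm {α E : Type*} [SeminormedAddGroup E] {f : α → E}
    (hf : Tendsto f cofinite (𝓝 0)) {c : ℝ} (hc : 0 < c) : {x | c ≤ ‖f x‖}.Finite := by
  simpa using eventually_cofinite.1 (hf.norm.eventually (gt_mem_nhds (by simpa using hc)))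

theorem Filter.Tendsto.exists_forall_norm_le_norm {α E : Type*} [SeminormedAddGroup E] {f : α → E}
    (hf : Tendsto f cofinite (𝓝 0)) {x₀ : α} (hx₀ : 0 < ‖f x₀‖) : ∃ x, ∀ z, ‖f z‖ ≤ ‖f x‖ := by
  obtain ⟨x, hx, hmax⟩ := Set.exists_max_image _ (‖f ·‖) (hf.finite_setOf_le_norm hx₀)
    ⟨x₀, le_refl (‖f x₀‖)⟩
  refine ⟨x, fun z => ?_⟩
  by_cases hz : ‖f x₀‖ ≤ ‖f z‖
  · exact hmax z hz
  · exact (not_le.1 hz).le.trans hx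

theorem tendsto_prod_comp_cofinite {ι X R : Type*} [Fintype ι] [NormedCommRing R] [NormOneClass R]
    {f : X → R} (hf : Tendsto f cofinite (𝓝 0)) :
    Tendsto (fun v : ι → X => ∏ i, f (v i)) cofinite (𝓝 0) := by
  classical
  obtain ⟨M, hM⟩ := hf.norm.bddAbove_range_of_cofinite
  rw [← coprodᵢ_cofinite]
  refine tendsto_iSup.2 fun i => ?_
  simp_rw [← Finset.mul_prod_erase Finset.univ _ (Finset.mem_univ i)]
  refine (hf.comp tendsto_comap).zero_mul_isBoundedUnder_le
    (isBoundedUnder_of ⟨M ^ (Finset.univ.erase i).card, fun v => ?_⟩)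
  exact (Finset.norm_prod_le _ _).trans <| (Finset.prod_le_prod (fun _ _ => norm_nonneg _)
    fun j _ => hM ⟨v j, rfl⟩).trans_eq (Finset.prod_const M)

section NormProd

variable {R : Type*} [NormedCommRing R] [NormOneClass R]

theorem norm_prod_le_pow {n : ℕ} {f : Fin n → R} {M : ℝ} (h : ∀ i, ‖f i‖ ≤ M) :
    ‖∏ i, f i‖ ≤ M ^ n :=
  (Finset.norm_prod_le _ _).trans <|
    (Finset.prod_le_prod (fun _ _ => norm_nonneg _) fun i _ => h i).trans_eq (Fin.prod_const n M)

theorem norm_prod_le_mul_norm {ι : Type*} [Fintype ι] [DecidableEq ι] {f : ι → R}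
    (h : ∀ k, ‖f k‖ ≤ 1) {i j : ι} (hij : i ≠ j) : ‖∏ k, f k‖ ≤ ‖f i‖ * ‖f j‖ := by
  refine (Finset.norm_prod_le _ _).trans ?_
  rw [← Finset.mul_prod_erase _ _ (Finset.mem_univ i),
    ← Finset.mul_prod_erase _ _ (Finset.mem_erase.2 ⟨hij.symm, Finset.mem_univ j⟩), ← mul_assoc]
  exact mul_le_of_le_one_right (by positivity)
    (Finset.prod_le_one (fun _ _ => norm_nonneg _) fun k _ => h k)

end NormProd

namespace AddAction

variable {G α : Type*} [AddGroup G] [AddAction G α]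

theorem card_orbit_eq_of_notMem_fixedPoints (hG : (Nat.card G).Prime) {x : α}
    (hx : x ∉ fixedPoints G α) : Nat.card (orbit G x) = Nat.card G := by
  have : Finite G := Nat.finite_of_card_ne_zero hG.ne_zero
  rw [Nat.card_coe_set_eq, ← index_stabilizer]
  refine ((Nat.dvd_prime hG).1 (stabilizer G x).index_dvd_card).resolve_left fun h => hx fun g => ?_
  exact mem_stabilizer_iff.1 (AddSubgroup.index_eq_one.1 h ▸ AddSubgroup.mem_top g)

variable {E : Type*} [AddCommGroup E] [TopologicalSpace E] [IsTopologicalAddGroup E] [T3Space E]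
  {f : α → E}

theorem tsum_orbit (hinv : ∀ (g : G) x, f (g +ᵥ x) = f x) (x₀ : α) :
    ∑' x : orbit G x₀, f x = Nat.card (orbit G x₀) • f x₀ := by
  refine (tsum_congr ?_).trans (tsum_const _)
  rintro ⟨_, g, rfl⟩
  exact hinv g x₀

theorem tsum_eq_tsum_orbitRel [Finite G] (hf : Summable f) (hinv : ∀ (g : G) x, f (g +ᵥ x) = f x) :
    ∑' x, f x = ∑' ω : orbitRel.Quotient G α, Nat.card (orbit G ω.out) • f ω.out := by
  let e := (selfEquivSigmaOrbits G α).symm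
  rw [← e.tsum_eq, Summable.tsum_sigma' (f := fun c => f (e c))
    (fun ω => (Set.finite_range fun g : G => g +ᵥ ω.out).summable _) (e.summable_iff.2 hf)]
  exact tsum_congr fun ω => tsum_orbit hinv ω.out

/-- The orbits outside `S` are free, so each of them contributes `Nat.card G` equal terms. -/
theorem norm_tsum_sub_tsum_subtype_le {C : Type*} [NormedRing C] [IsUltrametricDist C]
    [CompleteSpace C] (hG : (Nat.card G).Prime) {f : α → C} (hf : Summable f)
    (hinv : ∀ (g : G) x, f (g +ᵥ x) = f x) {S : Set α} (hS : ∀ (g : G) x, g +ᵥ x ∈ S ↔ x ∈ S)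
    (hfix : fixedPoints G α ⊆ S) {B : ℝ} (hB0 : 0 ≤ B) (hB : ∀ x ∉ S, ‖f x‖ ≤ B) :
    ‖∑' x, f x - ∑' x : S, f x‖ ≤ ‖(Nat.card G : C)‖ * B := by
  have : Finite G := Nat.finite_of_card_ne_zero hG.ne_zero
  have hinvS : ∀ (g : G) x, Sᶜ.indicator f (g +ᵥ x) = Sᶜ.indicator f x := fun g x => by
    by_cases hx : x ∈ S
    · rw [Set.indicator_of_notMem (Set.notMem_compl_iff.2 ((hS g x).2 hx)),
        Set.indicator_of_notMem (Set.notMem_compl_iff.2 hx)]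
    · rw [Set.indicator_of_mem (mt (hS g x).1 hx), Set.indicator_of_mem hx, hinv]
  rw [tsum_subtype, ← hf.tsum_sub (hf.indicator S), ← Pi.sub_def, ← Set.indicator_compl,
    tsum_eq_tsum_orbitRel (hf.indicator _) hinvS]
  refine IsUltrametricDist.norm_tsum_le_of_forall_le_of_nonneg (by positivity) fun ω => ?_
  by_cases hω : ω.out ∈ S
  · rw [Set.indicator_of_notMem (Set.notMem_compl_iff.2 hω), smul_zero, norm_zero]
    positivity
  · rw [Set.indicator_of_mem hω, card_orbit_eq_of_notMem_fixedPoints hG fun h => hω (hfix h),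
      nsmul_eq_mul]
    exact (norm_mul_le _ _).trans (mul_le_mul_of_nonneg_left (hB _ hω) (norm_nonneg _))

end AddAction

namespace PadicFracExp

variable {p : ℕ}

def zero : PadicFracExp p := ⟨0, le_rfl, 0, 0, by simp⟩

def mulP (q : PadicFracExp p) : PadicFracExp p :=
  ⟨q * p, mul_nonneg q.2.1 p.cast_nonneg, by
    obtain ⟨n, m, h⟩ := q.2.2
    exact ⟨n, m * p, by push_cast; rw [mul_right_comm, h]⟩⟩

@[simp] lemma coe_zero : ((zero : PadicFracExp p) : ℚ) = 0 := rfl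

abbrev Tuple (q : PadicFracExp p) : Type := {v : Fin p → PadicFracExp p // ∑ i, (v i : ℚ) = q}

lemma Tuple.coe_apply_nonneg {q : PadicFracExp p} (v : Tuple q) (i : Fin p) : 0 ≤ (v.1 i : ℚ) :=
  (v.1 i).2.1

lemma Tuple.coe_apply_lt {q : PadicFracExp p} {v : Tuple q} {i j : Fin p} (hij : i ≠ j)
    (hj : 0 < (v.1 j : ℚ)) : (v.1 i : ℚ) < q := by
  have := Finset.add_le_sum (fun k _ => v.coe_apply_nonneg k) (Finset.mem_univ i)
    (Finset.mem_univ j) hij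
  rw [v.2] at this
  linarith

section Coefficients

variable {C : Type*} [NormedField C]

def Tuple.prod {q : PadicFracExp p} (y : PadicFracExp p → C) (v : Tuple q) : C := ∏ i, y (v.1 i)

noncomputable def powCoeff (y : PadicFracExp p → C) (q : PadicFracExp p) : C :=
  ∑' v : Tuple q, v.prod y

def coeffOneAddMulT (a : C) (q : PadicFracExp p) : C :=
  (if (q : ℚ) = 0 then 1 else 0) + (if (q : ℚ) = 1 then a else 0)

lemma coeffOneAddMulT_eq_zero (a : C) {q : PadicFracExp p} (h0 : 0 < (q : ℚ)) (h1 : (q : ℚ) < 1) :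
    coeffOneAddMulT a q = 0 := by
  rw [coeffOneAddMulT, if_neg h0.ne', if_neg h1.ne, add_zero]

lemma norm_coeffOneAddMulT_le {a : C} (ha : ‖a‖ ≤ 1) (q : PadicFracExp p) :
    ‖coeffOneAddMulT a q‖ ≤ 1 := by
  unfold coeffOneAddMulT
  split_ifs with h0 h1 <;> simp_all

lemma summable_prod [CompleteSpace C] [IsUltrametricDist C] {y : PadicFracExp p → C}
    (hy : Tendsto y cofinite (𝓝 0)) (q : PadicFracExp p) :
    Summable fun v : Tuple q => v.prod y :=
  NonarchimedeanAddGroup.summable_of_tendsto_cofinite_zero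
    ((tendsto_prod_comp_cofinite hy).comp Subtype.val_injective.tendsto_cofinite)

end Coefficients

section NeZero

variable [NeZero p]

def divP (q : PadicFracExp p) : PadicFracExp p :=
  ⟨q / p, div_nonneg q.2.1 p.cast_nonneg, by
    obtain ⟨n, m, h⟩ := q.2.2
    exact ⟨n + 1, m, by rw [pow_succ', ← mul_assoc, div_mul_cancel₀ _ (NeZero.ne _), h]⟩⟩

def invPow (n : ℕ) : PadicFracExp p :=
  ⟨(p : ℚ)⁻¹ ^ n, by positivity, n, 1, by rw [← mul_pow, inv_mul_cancel₀ (NeZero.ne _)]; simp⟩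

@[simp] lemma coe_divP (q : PadicFracExp p) : (q.divP : ℚ) = q / p := rfl

@[simp] lemma coe_invPow (n : ℕ) : (invPow n : PadicFracExp p) = (p : ℚ)⁻¹ ^ n := rfl

lemma divP_mulP (q : PadicFracExp p) : q.mulP.divP = q :=
  Subtype.ext (mul_div_cancel_right₀ _ (NeZero.ne _))

lemma divP_invPow (n : ℕ) : (invPow n : PadicFracExp p).divP = invPow (n + 1) :=
  Subtype.ext (by simp [pow_succ, div_eq_mul_inv])

lemma invPow_injective (hp : 1 < p) : Function.Injective (invPow : ℕ → PadicFracExp p) :=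
  fun m n h => pow_right_injective₀ (by positivity) (inv_ne_one.2 (by exact_mod_cast hp.ne'))
    (congrArg Subtype.val h)

namespace Tuple

variable {q : PadicFracExp p}

def diag (q : PadicFracExp p) : Tuple q :=
  ⟨fun _ => q.divP, by simp [mul_div_cancel₀ _ (NeZero.ne (p : ℚ))]⟩

def single (q : PadicFracExp p) : Tuple q :=
  ⟨fun i => if i = 0 then q else zero, by simp [apply_ite]⟩

instance : AddAction (Fin p) (Tuple q) where
  vadd k v := ⟨fun i => v.1 (i + k),
    (Equiv.sum_comp (Equiv.addRight k) fun i => (v.1 i : ℚ)).trans v.2⟩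
  zero_vadd v := Subtype.ext <| funext fun i => congrArg v.1 (add_zero i)
  add_vadd k l v := Subtype.ext <| funext fun i => congrArg v.1 (add_assoc i k l).symm

lemma single_apply (q : PadicFracExp p) (i : Fin p) :
    (single q).1 i = if i = 0 then q else zero := rfl

lemma vadd_apply (k : Fin p) (v : Tuple q) (i : Fin p) : (k +ᵥ v).1 i = v.1 (i + k) := rfl

lemma eq_diag_zero (v : Tuple (zero : PadicFracExp p)) : v = diag zero := by
  have h := (Finset.sum_eq_zero_iff_of_nonneg fun i _ => v.coe_apply_nonneg i).1 v.2
  exact Subtype.ext <| funext fun i => Subtype.ext <| by simpa [diag] using h i (Finset.mem_univ i)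

lemma mem_fixedPoints_iff {v : Tuple q} :
    v ∈ AddAction.fixedPoints (Fin p) (Tuple q) ↔ v = diag q := by
  refine ⟨fun h => ?_, fun h k => h ▸ rfl⟩
  have hconst : ∀ i, v.1 i = v.1 0 := fun i => by
    rw [← congrArg (fun w : Tuple q => w.1 0) (h i), vadd_apply, zero_add]
  have hsum := v.2
  simp only [hconst, Finset.sum_const, Finset.card_univ, Fintype.card_fin, nsmul_eq_mul] at hsum
  refine Subtype.ext (funext fun i => Subtype.ext ?_)
  rw [hconst]
  exact eq_div_of_mul_eq (NeZero.ne _) ((mul_comm _ _).trans hsum)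

lemma vadd_eq_diag_iff {k : Fin p} {v : Tuple q} : k +ᵥ v = diag q ↔ v = diag q := by
  rw [vadd_eq_iff_eq_neg_vadd, mem_fixedPoints_iff.2 rfl]

lemma exists_pos_pos_of_notMem_orbit_single (hq : (q : ℚ) ≠ 0) {v : Tuple q}
    (hv : v ∉ AddAction.orbit (Fin p) (single q)) :
    ∃ i j, i ≠ j ∧ 0 < (v.1 i : ℚ) ∧ 0 < (v.1 j : ℚ) := by
  obtain ⟨i, -, hi⟩ := Finset.exists_ne_zero_of_sum_ne_zero (v.2.trans_ne hq)
  by_contra! h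
  have hzero : ∀ j, j ≠ i → (v.1 j : ℚ) = 0 := fun j hj =>
    ((v.coe_apply_nonneg j).eq_or_lt.resolve_right fun hj' =>
      (h i j hj.symm ((v.coe_apply_nonneg i).lt_of_ne' hi)).not_gt hj').symm
  have hi_eq : (v.1 i : ℚ) = q :=
    (Finset.sum_eq_single i (fun j _ hj => hzero j hj) (by simp)).symm.trans v.2
  refine hv ⟨-i, Subtype.ext <| funext fun j => Subtype.ext ?_⟩
  rw [vadd_apply]
  by_cases hj : j = i
  · simp [single, hj, hi_eq]
  · simp [single, hzero j hj, add_neg_eq_zero, hj]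

end Tuple

section Coefficients

variable {C : Type*} [NormedField C] (y : PadicFracExp p → C)

lemma Tuple.prod_vadd {q : PadicFracExp p} (k : Fin p) (v : Tuple q) : (k +ᵥ v).prod y = v.prod y :=
  Equiv.prod_comp (Equiv.addRight k) fun i => y (v.1 i)

lemma Tuple.prod_diag (q : PadicFracExp p) : (Tuple.diag q).prod y = y q.divP ^ p :=
  Fin.prod_const p (y q.divP)

lemma Tuple.prod_single (q : PadicFracExp p) :
    (Tuple.single q).prod y = y q * y zero ^ (p - 1) := by
  simp only [Tuple.prod, Tuple.single_apply, apply_ite y, Finset.prod_ite, Finset.prod_const,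
    Finset.filter_ne', Finset.filter_eq', Finset.mem_univ, if_true, Finset.card_singleton, pow_one,
    Finset.card_erase_of_mem, Finset.card_univ, Fintype.card_fin]

lemma powCoeff_zero : powCoeff y zero = y zero ^ p := by
  rw [powCoeff, tsum_eq_single (Tuple.diag zero) fun v hv => absurd (Tuple.eq_diag_zero v) hv,
    Tuple.prod_diag]
  exact congrArg (y · ^ p) (Subtype.ext (zero_div _))

theorem norm_apply_zero {a : C} (hroot : ∀ q, powCoeff y q = coeffOneAddMulT a q) :
    ‖y zero‖ = 1 := by
  have h := hroot zero
  rw [powCoeff_zero, coeffOneAddMulT, coe_zero, if_pos rfl, if_neg zero_ne_one, add_zero] at h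
  rw [← pow_eq_one_iff_of_nonneg (norm_nonneg _) (NeZero.ne p), ← norm_pow, h, norm_one]

end Coefficients

end NeZero

section Prime

variable [Fact p.Prime] {C : Type*} [NormedField C] [IsUltrametricDist C] [CompleteSpace C]
  {y : PadicFracExp p → C}

lemma card_fin_prime : (Nat.card (Fin p)).Prime := (Nat.card_fin p).symm ▸ Fact.out

theorem norm_powCoeff_sub_pow_le {q : PadicFracExp p}
    (hs : Summable fun v : Tuple q => v.prod y) {B : ℝ} (hB0 : 0 ≤ B)
    (hB : ∀ v, v ≠ Tuple.diag q → ‖v.prod y‖ ≤ B) :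
    ‖powCoeff y q - y q.divP ^ p‖ ≤ ‖(p : C)‖ * B := by
  have := AddAction.norm_tsum_sub_tsum_subtype_le card_fin_prime hs (Tuple.prod_vadd y)
    (S := {Tuple.diag q}) (fun _ _ => Tuple.vadd_eq_diag_iff)
    (fun _ hv => Tuple.mem_fixedPoints_iff.1 hv) hB0 hB
  rwa [tsum_singleton, Tuple.prod_diag, Nat.card_fin] at this

lemma Tuple.single_ne_diag {q : PadicFracExp p} (hq : (q : ℚ) ≠ 0) :
    Tuple.single q ≠ Tuple.diag q := fun h => by
  have h0 : (q : ℚ) = q / p := congrArg (fun v : Tuple q => (v.1 0 : ℚ)) h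
  rw [eq_div_iff (NeZero.ne _), mul_eq_left₀ hq] at h0
  exact (Fact.out : p.Prime).one_lt.ne' (by exact_mod_cast h0)

theorem norm_powCoeff_sub_pow_sub_le {q : PadicFracExp p} (hq : 0 < (q : ℚ))
    (hs : Summable fun v : Tuple q => v.prod y) (hle1 : ∀ r, ‖y r‖ ≤ 1) {K : ℝ}
    (hK0 : 0 ≤ K) (hK : ∀ r : PadicFracExp p, 0 < (r : ℚ) → (r : ℚ) < q → ‖y r‖ ^ p ≤ K) :
    ‖powCoeff y q - y q.divP ^ p - p * (y q * y zero ^ (p - 1))‖ ^ p ≤ ‖(p : C)‖ ^ p * K ^ 2 := by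
  have hsd := Tuple.single_ne_diag hq.ne'
  have hdiag : Tuple.diag q ∉ AddAction.orbit (Fin p) (Tuple.single q) :=
    fun ⟨_, h⟩ => hsd (Tuple.vadd_eq_diag_iff.1 h)
  set S := insert (Tuple.diag q) (AddAction.orbit (Fin p) (Tuple.single q))
  have hS : ∀ (k : Fin p) v, k +ᵥ v ∈ S ↔ v ∈ S := fun k v => by
    rw [Set.mem_insert_iff, Set.mem_insert_iff, Tuple.vadd_eq_diag_iff,
      ← AddAction.orbit_eq_iff, AddAction.orbit_vadd, AddAction.orbit_eq_iff]
  have hsumS : ∑' v : S, v.1.prod y = y q.divP ^ p + p * (y q * y zero ^ (p - 1)) := by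
    rw [show S = _ from Set.insert_eq _ _, Summable.tsum_union_disjoint
      (Set.disjoint_singleton_left.2 hdiag) ((Set.finite_singleton _).summable _)
      ((Set.finite_range _).summable _), tsum_singleton, Tuple.prod_diag,
      AddAction.tsum_orbit (Tuple.prod_vadd y), AddAction.card_orbit_eq_of_notMem_fixedPoints
      card_fin_prime (mt Tuple.mem_fixedPoints_iff.1 hsd), Nat.card_fin, nsmul_eq_mul,
      Tuple.prod_single]
  set B := (K ^ 2) ^ ((p : ℝ)⁻¹)
  have hBp : B ^ p = K ^ 2 := Real.rpow_inv_natCast_pow (by positivity) (NeZero.ne p)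
  have hB : ∀ v ∉ S, ‖v.prod y‖ ≤ B := fun v hv => by
    obtain ⟨i, j, hij, hi, hj⟩ :=
      Tuple.exists_pos_pos_of_notMem_orbit_single hq.ne' fun h => hv (Or.inr h)
    refine (norm_prod_le_mul_norm (fun k => hle1 _) hij).trans ?_
    rw [← pow_le_pow_iff_left₀ (by positivity) (by positivity) (NeZero.ne p), hBp, mul_pow, sq]
    exact mul_le_mul (hK _ hi (Tuple.coe_apply_lt hij hj))
      (hK _ hj (Tuple.coe_apply_lt hij.symm hi)) (by positivity) hK0
  have := AddAction.norm_tsum_sub_tsum_subtype_le card_fin_prime hs (Tuple.prod_vadd y) hS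
    (fun _ hv => Or.inl (Tuple.mem_fixedPoints_iff.1 hv)) (by positivity) hB
  rw [hsumS, Nat.card_fin, ← sub_sub] at this
  calc _ ≤ (‖(p : C)‖ * B) ^ p := pow_le_pow_left₀ (norm_nonneg _) this p
    _ = ‖(p : C)‖ ^ p * K ^ 2 := by rw [mul_pow, hBp]

variable {a : C}

theorem norm_le_one (hy : Tendsto y cofinite (𝓝 0))
    (hroot : ∀ q, powCoeff y q = coeffOneAddMulT a q) (ha : ‖a‖ ≤ 1) (hp : ‖(p : C)‖ < 1)
    (r : PadicFracExp p) : ‖y r‖ ≤ 1 := by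
  by_contra! hr
  obtain ⟨r₀, hmax⟩ := hy.exists_forall_norm_le_norm (one_pos.trans hr)
  have hM : 1 < ‖y r₀‖ ^ p := one_lt_pow₀ (hr.trans_le (hmax r)) (NeZero.ne p)
  have hE := norm_powCoeff_sub_pow_le (summable_prod hy r₀.mulP) (by positivity)
    fun v _ => norm_prod_le_pow fun i => hmax (v.1 i)
  rw [divP_mulP, hroot, norm_sub_rev] at hE
  have : ‖y r₀ ^ p‖ < ‖y r₀‖ ^ p := calc
    ‖y r₀ ^ p‖ = ‖coeffOneAddMulT a r₀.mulP + (y r₀ ^ p - coeffOneAddMulT a r₀.mulP)‖ := by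
      rw [add_sub_cancel]
    _ ≤ max ‖coeffOneAddMulT a r₀.mulP‖ ‖y r₀ ^ p - coeffOneAddMulT a r₀.mulP‖ :=
      IsUltrametricDist.norm_add_le_max _ _
    _ < ‖y r₀‖ ^ p := max_lt ((norm_coeffOneAddMulT_le ha _).trans_lt hM)
      (hE.trans_lt (mul_lt_of_lt_one_left (by positivity) hp))
  exact this.ne (norm_pow _ _)

theorem norm_pow_le_norm_p (hy : Tendsto y cofinite (𝓝 0))
    (hroot : ∀ q, powCoeff y q = coeffOneAddMulT a q) (hle1 : ∀ r, ‖y r‖ ≤ 1)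
    {r : PadicFracExp p} (hr0 : 0 < (r : ℚ)) (hr1 : (r : ℚ) * p < 1) : ‖y r‖ ^ p ≤ ‖(p : C)‖ := by
  have hE := norm_powCoeff_sub_pow_le (summable_prod hy r.mulP) zero_le_one
    fun v _ => (norm_prod_le_pow fun i => hle1 (v.1 i)).trans_eq (one_pow p)
  have hrp : 0 < (r.mulP : ℚ) := mul_pos hr0 (Nat.cast_pos.2 (Fact.out : p.Prime).pos)
  rwa [divP_mulP, hroot, coeffOneAddMulT_eq_zero a hrp hr1, zero_sub, norm_neg,
    norm_pow, mul_one] at hE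

theorem norm_pow_invPow_one (hy : Tendsto y cofinite (𝓝 0))
    (hroot : ∀ q, powCoeff y q = coeffOneAddMulT a q) (hle1 : ∀ r, ‖y r‖ ≤ 1)
    (hpa : ‖(p : C)‖ < ‖a‖) : ‖y (invPow 1)‖ ^ p = ‖a‖ := by
  have hE := norm_powCoeff_sub_pow_le (summable_prod hy (invPow 0)) zero_le_one
    fun v _ => (norm_prod_le_pow fun i => hle1 (v.1 i)).trans_eq (one_pow p)
  rw [divP_invPow, hroot, mul_one, coeffOneAddMulT, coe_invPow, pow_zero, if_neg one_ne_zero,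
    if_pos rfl, zero_add, sub_eq_add_neg] at hE
  rw [← norm_pow, ← norm_neg]
  exact (IsUltrametricDist.norm_eq_of_add_norm_lt_max
    ((hE.trans_lt hpa).trans_le (le_max_left _ _))).symm

theorem norm_pow_invPow_succ (hy : Tendsto y cofinite (𝓝 0))
    (hroot : ∀ q, powCoeff y q = coeffOneAddMulT a q) (hle1 : ∀ r, ‖y r‖ ≤ 1)
    (hp0 : (p : C) ≠ 0) {n : ℕ} (hn : n ≠ 0) (h : ‖(p : C)‖ ^ 2 < ‖y (invPow n)‖ ^ p) :
    ‖y (invPow (n + 1))‖ ^ p = ‖(p : C)‖ * ‖y (invPow n)‖ := by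
  have hp1 : (1 : ℚ) < p := by exact_mod_cast (Fact.out : p.Prime).one_lt
  have hq0 : 0 < ((invPow n : PadicFracExp p) : ℚ) :=
    pow_pos (inv_pos.2 (zero_lt_one.trans hp1)) _
  have hqp : ((invPow n : PadicFracExp p) : ℚ) ≤ (p : ℚ)⁻¹ :=
    pow_le_of_le_one (inv_nonneg.2 (zero_le_one.trans hp1.le)) (inv_le_one_of_one_le₀ hp1.le) hn
  have hE := norm_powCoeff_sub_pow_sub_le hq0 (summable_prod hy _) hle1 (norm_nonneg (p : C))
    fun r hr0 hrq => norm_pow_le_norm_p hy hroot hle1 hr0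
      (by rw [← lt_mul_inv_iff₀ (zero_lt_one.trans hp1), one_mul]; exact hrq.trans_le hqp)
  rw [hroot, coeffOneAddMulT_eq_zero a hq0 (hqp.trans_lt (inv_lt_one_of_one_lt₀ hp1)), zero_sub,
    divP_invPow] at hE
  have ht : ‖(p : C) * (y (invPow n) * y zero ^ (p - 1))‖ = ‖(p : C)‖ * ‖y (invPow n)‖ := by
    rw [norm_mul, norm_mul, norm_pow, norm_apply_zero y hroot, one_pow, mul_one]
  have hlt : ‖y (invPow (n + 1)) ^ p + p * (y (invPow n) * y zero ^ (p - 1))‖ <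
      ‖(p : C) * (y (invPow n) * y zero ^ (p - 1))‖ := by
    rw [← pow_lt_pow_iff_left₀ (norm_nonneg _) (norm_nonneg _) (NeZero.ne p), ← norm_neg, neg_add',
      ht, mul_pow]
    exact hE.trans_lt (mul_lt_mul_of_pos_left h (pow_pos (norm_pos_iff.2 hp0) p))
  rw [← norm_pow, IsUltrametricDist.norm_eq_of_add_norm_lt_max (hlt.trans_le (le_max_right _ _)),
    ht]

/-- The invariant implies `‖p‖ ^ 2 < ‖y (invPow n)‖ ^ p`, the hypothesis of `norm_pow_invPow_succ`,
and is preserved by the resulting identity. -/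
theorem norm_p_lt_norm_pow_invPow (hy : Tendsto y cofinite (𝓝 0))
    (hroot : ∀ q, powCoeff y q = coeffOneAddMulT a q) (hle1 : ∀ r, ‖y r‖ ≤ 1)
    (hp0 : (p : C) ≠ 0) (hpa : ‖(p : C)‖ < ‖a‖) (n : ℕ) :
    ‖(p : C)‖ < ‖y (invPow (n + 1))‖ ^ (p - 1) := by
  induction n with
  | zero =>
    exact (norm_pow_invPow_one hy hroot hle1 hpa ▸ hpa).trans_le
      (pow_le_pow_of_le_one (norm_nonneg _) (hle1 _) (Nat.sub_le p 1))
  | succ n ih =>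
    have hp1 : p - 1 ≠ 0 := Nat.sub_ne_zero_of_lt (Fact.out : p.Prime).one_lt
    have hnp := norm_pos_iff.2 hp0
    have hγ : ‖(p : C)‖ < ‖y (invPow (n + 1))‖ :=
      ih.trans_le (pow_le_of_le_one (norm_nonneg _) (hle1 _) hp1)
    have hstep := norm_pow_invPow_succ hy hroot hle1 hp0 n.succ_ne_zero (by
      rw [sq, ← pow_sub_one_mul (NeZero.ne p)]
      exact mul_lt_mul'' ih hγ hnp.le hnp.le)
    rw [← pow_lt_pow_iff_left₀ hnp.le (by positivity) (NeZero.ne p), ← pow_mul, mul_comm, pow_mul,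
      hstep, mul_pow, ← pow_sub_one_mul (NeZero.ne p)]
    exact mul_lt_mul_of_pos_left ih (pow_pos hnp _)

end Prime

end PadicFracExp

theorem no_pth_root_of_one_add_aT_general
    {p : ℕ} [Fact p.Prime]
    (C : Type*) [NormedField C] [CompleteSpace C] [IsUltrametricDist C]
    [Algebra ℚ_[p] C]
    (a : C) (ha : ‖a‖ ≤ 1) (hpa : ‖(p : C)‖ < ‖a‖) :
    ¬ ∃ y : PadicFracExp p → C,
        Filter.Tendsto y Filter.cofinite (nhds 0) ∧
        ∀ q : PadicFracExp p,
          (∑' v : {v : Fin p → PadicFracExp p // (∑ i, ((v i : ℚ))) = (q : ℚ)},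
              ∏ i, y (v.1 i))
            = (if (q : ℚ) = 0 then 1 else 0) + (if (q : ℚ) = 1 then a else 0) := by
  rintro ⟨y, hy, hroot⟩
  have hp : p.Prime := Fact.out
  have hp0 : (p : C) ≠ 0 := by
    rw [← map_natCast (algebraMap ℚ_[p] C)]
    exact (map_ne_zero _).2 (Nat.cast_ne_zero.2 hp.ne_zero)
  have hle1 := PadicFracExp.norm_le_one hy hroot ha (hpa.trans_le ha)
  have hlower (n : ℕ) : ‖(p : C)‖ ≤ ‖y (PadicFracExp.invPow (n + 1))‖ :=
    (PadicFracExp.norm_p_lt_norm_pow_invPow hy hroot hle1 hp0 hpa n).le.trans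
      (pow_le_of_le_one (norm_nonneg _) (hle1 _) (Nat.sub_ne_zero_of_lt hp.one_lt))
  exact (hy.finite_setOf_le_norm (norm_pos_iff.2 hp0)).not_infinite
    (Set.infinite_of_injective_forall_mem
      ((PadicFracExp.invPow_injective hp.one_lt).comp (add_left_injective 1)) hlower)

/-- Let `C = ℂ_p` (formalized as a complete algebraically closed
nonarchimedean normed field with an isometric embedding of `ℚ_p`) and let `a ∈ O_C`
with `|p| < |a|`.  Then `1 + aT` has no `p`-th root in `C⟨T^{1/p^∞}⟩`.  An element of
`C⟨T^{1/p^∞}⟩` (the `p`-adic completion of `⋃ₙ O_C[T^{1/pⁿ}]`, with `p` inverted) is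
encoded by its coefficient family `y : ℕ[1/p] → C`, which tends to `0` with respect to
the cofinite filter; the coefficient of `T^q` in `y^p` is the `p`-fold convolution
`∑ y_{q₁} ⋯ y_{q_p}` over tuples with `q₁ + ⋯ + q_p = q`, and the coefficients of
`1 + aT` are `1` at `q = 0` and `a` at `q = 1`. -/
theorem no_pth_root_of_one_add_aT
    {p : ℕ} [Fact p.Prime]
    (C : Type*) [NormedField C] [CompleteSpace C] [IsUltrametricDist C]
    [IsAlgClosed C] [Algebra ℚ_[p] C]
    (hisom : ∀ q : ℚ_[p], ‖algebraMap ℚ_[p] C q‖ = ‖q‖)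
    (a : C) (ha : ‖a‖ ≤ 1) (hpa : ‖(p : C)‖ < ‖a‖) :
    ¬ ∃ y : PadicFracExp p → C,
        Filter.Tendsto y Filter.cofinite (nhds 0) ∧
        ∀ q : PadicFracExp p,
          (∑' v : {v : Fin p → PadicFracExp p // (∑ i, ((v i : ℚ))) = (q : ℚ)},
              ∏ i, y (v.1 i))
            = (if (q : ℚ) = 0 then 1 else 0) + (if (q : ℚ) = 1 then a else 0) :=
  no_pth_root_of_one_add_aT_general C a ha hpa
end
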